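/- arXiv:1302.2337 — 9 statements merged into one kernel-verified Lean document; each statement's English description precedes it below -/
import Mathlib

section
/- Let x₀, x₁ ∈ ℝ with x₀ ≠ x₁, and let y₀, y₁ ≥ 0 be not both zero. Suppose |x₁ − x₀| ≤ (1/2)·[π·(y₁² + y₀²) + 4y₁y₀]. Then the unique solution δ* ∈ (−2π,2π) of f(δ, y₀², y₁²) = x₁ − x₀ satisfies −π ≤ δ* ≤ π, δ* ≠ 0, and the Legendre–Fenchel transform satisfies Λ*(x₀, y₀, x₁, y₁) = (δ*)²·(y₁² + y₀² − 2y₁y₀·cos(δ*/2)) / (2·sin²(δ*/2)). -/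
/-!
Write `d = x₁ - x₀`, `p = y₁² + y₀²`, `q = 2y₁y₀`, so that `f(δ, y₀², y₁²) = F(δ)` with
`F = deltaFun p q`. For `0 < |δ| < π`, completing the square in `γ` gives
`sup_γ (x₁δ + y₁γ - Λ(δ, γ)) = w(δ) := dδ + δ(p cos(δ/2) - q) / sin(δ/2)` (`w = dualProfile d p q`),
and `w' = d - F`.
`F` is odd, vanishes at `0`, and is strictly increasing on `(0, 2π)` with `F(π) = pπ/2 + q`,
so the closeness condition puts the unique root `δ*` of `F = d` in `[-π, π] \ {0}`.
For `d > 0`, `w` increases on `(0, δ*]`, decreases on `[δ*, π]` and `w(-δ) ≤ w(δ)`; the slice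
`δ = 0` contributes at most `2(p - q) = lim_{δ→0} w(δ)`. Hence `Λ* = w(δ*)`, which equals the stated
expression because `F(δ*) = d`. The case `d < 0` follows from the symmetry `(x, δ) ↦ (-x, -δ)`.
-/

/-- The function `f(δ, v₀, v₁)` appearing in the δ-equation:
`f(δ) = [(v₁+v₀)(δ − sin δ) − 2√(v₁v₀)(δ·cos(δ/2) − 2·sin(δ/2))] / (2·sin²(δ/2))`
for `δ ≠ 0`, and `f(0) = 0`. -/
noncomputable def fdelta (δ v0 v1 : ℝ) : ℝ :=
  if δ = 0 then 0 else
    ((v1 + v0) * (δ - Real.sin δ) -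
      2 * Real.sqrt (v1 * v0) * (δ * Real.cos (δ / 2) - 2 * Real.sin (δ / 2))) /
    (2 * Real.sin (δ / 2) ^ 2)

/-- The limiting cumulant generating function `Λ` for the Grushin model with
initial point `(x₀, y₀)`: for `0 < |δ| < π`,
`Λ(δ,γ) = [(4δ²y₀² + γ²)·sin(δ/2) + 4x₀δ²·cos(δ/2) + 4y₀γδ] / (4δ·cos(δ/2))`;
`Λ(0,γ) = γ²/8 + y₀γ`; and `Λ(δ,γ) = +∞` for `|δ| ≥ π`. -/
noncomputable def Lam (x0 y0 : ℝ) (δ γ : ℝ) : EReal :=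
  if |δ| < Real.pi then
    if δ = 0 then ((γ ^ 2 / 8 + y0 * γ : ℝ) : EReal)
    else ((((4 * δ ^ 2 * y0 ^ 2 + γ ^ 2) * Real.sin (δ / 2) + 4 * x0 * δ ^ 2 * Real.cos (δ / 2) +
        4 * y0 * γ * δ) / (4 * δ * Real.cos (δ / 2)) : ℝ) : EReal)
  else ⊤

/-- The Legendre–Fenchel transform `Λ*(x₀,y₀,x₁,y₁) = sup_{(δ,γ)} [x₁δ + y₁γ − Λ(δ,γ)]`. -/
noncomputable def LamStar (x0 y0 x1 y1 : ℝ) : EReal :=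
  ⨆ p : ℝ × ℝ, (((x1 * p.1 + y1 * p.2 : ℝ) : EReal) - Lam x0 y0 p.1 p.2)

open Real Set Filter Topology

lemma sin_sub_mul_cos_pos {t : ℝ} (h0 : 0 < t) (hπ : t < π) : 0 < sin t - t * cos t := by
  rcases le_or_gt (cos t) 0 with hc | hc
  · nlinarith [sin_pos_of_pos_of_lt_pi h0 hπ]
  · have ht : t < π / 2 := by
      by_contra! h
      linarith [cos_nonpos_of_pi_div_two_le_of_le h (by linarith)]
    have := lt_tan h0 ht
    rw [tan_eq_sin_div_cos, lt_div_iff₀ hc] at this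
    linarith

lemma two_mul_sin_mul_cos_le {t : ℝ} (h0 : 0 ≤ t) (hπ : t ≤ π) :
    2 * sin t * cos t ≤ t * (1 + cos t ^ 2) := by
  rcases le_or_gt (cos t) 0 with hc | hc
  · nlinarith [sin_nonneg_of_nonneg_of_le_pi h0 hπ]
  · nlinarith [sin_le h0, sq_nonneg (1 - cos t)]

lemma sin_eq_two_mul_sin_half_mul_cos_half (x : ℝ) : sin x = 2 * sin (x / 2) * cos (x / 2) := by
  rw [← sin_two_mul, mul_div_cancel₀ x two_ne_zero]

lemma cos_eq_one_sub_two_mul_sin_half_sq (x : ℝ) : cos x = 1 - 2 * sin (x / 2) ^ 2 := by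
  have := cos_two_mul' (x / 2)
  rw [mul_div_cancel₀ x two_ne_zero] at this
  linarith [sin_sq_add_cos_sq (x / 2)]

lemma hasDerivAt_sin_half (δ : ℝ) :
    HasDerivAt (fun x => sin (x / 2)) (cos (δ / 2) / 2) δ :=
  ((hasDerivAt_id δ).div_const 2).sin.congr_deriv (by simp [div_eq_mul_inv])

lemma hasDerivAt_cos_half (δ : ℝ) :
    HasDerivAt (fun x => cos (x / 2)) (-sin (δ / 2) / 2) δ :=
  ((hasDerivAt_id δ).div_const 2).cos.congr_deriv (by simp [div_eq_mul_inv])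

lemma sin_half_pos {δ : ℝ} (h0 : 0 < δ) (h2 : δ < 2 * π) : 0 < sin (δ / 2) :=
  sin_pos_of_pos_of_lt_pi (by linarith) (by linarith)

lemma cos_half_pos {δ : ℝ} (hδ : |δ| < π) : 0 < cos (δ / 2) := by
  have := abs_lt.1 hδ
  exact cos_pos_of_mem_Ioo ⟨by linarith, by linarith⟩

lemma mul_sin_half_pos {δ : ℝ} (h0 : δ ≠ 0) (h2 : |δ| < 2 * π) : 0 < δ * sin (δ / 2) := by
  rcases h0.lt_or_gt with hneg | hpos
  · have := sin_half_pos (neg_pos.2 hneg) (by rwa [abs_of_neg hneg] at h2)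
    rw [neg_div, sin_neg] at this
    nlinarith
  · exact mul_pos hpos (sin_half_pos hpos (by rwa [abs_of_pos hpos] at h2))

noncomputable def deltaFun (p q δ : ℝ) : ℝ :=
  (p * (δ - sin δ) - q * (δ * cos (δ / 2) - 2 * sin (δ / 2))) / (2 * sin (δ / 2) ^ 2)

lemma fdelta_sq_eq {y0 y1 : ℝ} (hy0 : 0 ≤ y0) (hy1 : 0 ≤ y1) (δ : ℝ) :
    fdelta δ (y0 ^ 2) (y1 ^ 2) = deltaFun (y1 ^ 2 + y0 ^ 2) (2 * y1 * y0) δ := by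
  rw [fdelta, deltaFun, ← mul_pow, sqrt_sq (mul_nonneg hy1 hy0)]
  split_ifs with h
  · simp [h]
  · ring

lemma deltaFun_neg (p q δ : ℝ) : deltaFun p q (-δ) = -deltaFun p q δ := by
  simp only [deltaFun, neg_div, sin_neg, cos_neg]
  ring

lemma deltaFun_pi (p q : ℝ) : deltaFun p q π = p * π / 2 + q := by
  simp [deltaFun, sin_pi_div_two, cos_pi_div_two]
  ring

lemma deltaFun_pos {p q δ : ℝ} (hp : 0 < p) (hq : 0 ≤ q) (h0 : 0 < δ) (h2 : δ < 2 * π) :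
    0 < deltaFun p q δ := by
  have hs := sin_half_pos h0 h2
  have := sin_sub_mul_cos_pos (t := δ / 2) (by linarith) (by linarith)
  have := sin_lt h0
  apply div_pos _ (by positivity)
  nlinarith

lemma hasDerivAt_deltaFun (p q : ℝ) {δ : ℝ} (hs : sin (δ / 2) ≠ 0) :
    HasDerivAt (deltaFun p q)
      ((2 * p * (sin (δ / 2) - δ / 2 * cos (δ / 2)) +
          q * (δ / 2 * (1 + cos (δ / 2) ^ 2) - 2 * sin (δ / 2) * cos (δ / 2))) /
        (2 * sin (δ / 2) ^ 3)) δ := by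
  have hnum : HasDerivAt (fun x => p * (x - sin x) - q * (x * cos (x / 2) - 2 * sin (x / 2)))
      (p * (1 - cos δ) - q * (cos (δ / 2) + δ * (-sin (δ / 2) / 2) - 2 * (cos (δ / 2) / 2))) δ :=
    (((hasDerivAt_id δ).sub (hasDerivAt_sin δ)).const_mul p).sub
      ((((hasDerivAt_id δ).fun_mul (hasDerivAt_cos_half δ)).sub
        ((hasDerivAt_sin_half δ).const_mul 2)).const_mul q) |>.congr_deriv (by simp)
  have hden : HasDerivAt (fun x => 2 * sin (x / 2) ^ 2)
      (2 * (2 * sin (δ / 2) * (cos (δ / 2) / 2))) δ := by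
    simpa using ((hasDerivAt_sin_half δ).pow 2).const_mul 2
  refine (hnum.div hden (by positivity)).congr_deriv ?_
  rw [sin_eq_two_mul_sin_half_mul_cos_half δ, cos_eq_one_sub_two_mul_sin_half_sq δ,
    div_eq_div_iff (by positivity) (by positivity)]
  linear_combination (2 * sin (δ / 2) ^ 3 * (4 * p * sin (δ / 2) ^ 2 + q * δ * sin (δ / 2))) *
    sin_sq_add_cos_sq (δ / 2)

lemma strictMonoOn_deltaFun {p q : ℝ} (hp : 0 < p) (hq : 0 ≤ q) :
    StrictMonoOn (deltaFun p q) (Ioo 0 (2 * π)) := by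
  have hderiv : ∀ δ ∈ Ioo 0 (2 * π), HasDerivAt (deltaFun p q) _ δ :=
    fun δ hδ => hasDerivAt_deltaFun p q (sin_half_pos hδ.1 hδ.2).ne'
  refine strictMonoOn_of_deriv_pos (convex_Ioo _ _)
    (fun δ hδ => (hderiv δ hδ).continuousAt.continuousWithinAt) fun δ hδ => ?_
  rw [interior_Ioo] at hδ
  rw [(hderiv δ hδ).deriv]
  have hs := sin_half_pos hδ.1 hδ.2
  have := sin_sub_mul_cos_pos (t := δ / 2) (by linarith [hδ.1]) (by linarith [hδ.2])
  have := two_mul_sin_mul_cos_le (t := δ / 2) (by linarith [hδ.1]) (by linarith [hδ.2])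
  apply div_pos _ (by positivity)
  nlinarith

-- The numerator is `O(a³)` and `sin (a / 2) ≥ a / π`.
lemma deltaFun_le_mul {p q a : ℝ} (hp : 0 ≤ p) (hq : 0 ≤ q) (h0 : 0 < a) (hπ : a ≤ π) :
    deltaFun p q a ≤ (p / 6 + q / 8) * π ^ 2 / 2 * a := by
  have hs : a / π ≤ sin (a / 2) := by
    simpa [div_eq_inv_mul, mul_comm, mul_assoc, mul_left_comm] using
      mul_le_sin (x := a / 2) (by positivity) (by linarith)
  have hsin : a - a ^ 3 / 6 < sin a := sin_gt_sub_cube h0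
  have hnum : p * (a - sin a) - q * (a * cos (a / 2) - 2 * sin (a / 2)) ≤
      (p / 6 + q / 8) * a ^ 3 := by
    have h1 : p * (a - sin a) ≤ p * (a ^ 3 / 6) := by gcongr; linarith
    have h2 : q * (2 * sin (a / 2) - a * cos (a / 2)) ≤ q * (a ^ 3 / 8) := by
      have := one_sub_sq_div_two_le_cos (x := a / 2)
      have := sin_le (x := a / 2) (by positivity)
      gcongr
      nlinarith
    linarith
  calc deltaFun p q a ≤ (p / 6 + q / 8) * a ^ 3 / (2 * (a / π) ^ 2) :=
        div_le_div₀ (by positivity) hnum (by positivity) (by gcongr)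
    _ = (p / 6 + q / 8) * π ^ 2 / 2 * a := by field_simp

lemma exists_deltaFun_eq {p q d : ℝ} (hp : 0 < p) (hq : 0 ≤ q) (hd : 0 < d)
    (hle : d ≤ deltaFun p q π) : ∃ δ ∈ Ioc 0 π, deltaFun p q δ = d := by
  set C := (p / 6 + q / 8) * π ^ 2 / 2
  have hC : 0 < C := by positivity
  set a := min π (d / (2 * C))
  have ha : 0 < a := lt_min pi_pos (by positivity)
  have hfa : deltaFun p q a ≤ d := calc
    deltaFun p q a ≤ C * a := deltaFun_le_mul hp.le hq ha (min_le_left _ _)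
    _ ≤ C * (d / (2 * C)) := by gcongr; exact min_le_right _ _
    _ ≤ d := by rw [mul_div_assoc', div_le_iff₀ (by positivity)]; nlinarith
  have hcont : ContinuousOn (deltaFun p q) (Icc a π) := fun δ hδ =>
    (hasDerivAt_deltaFun p q (sin_half_pos (ha.trans_le hδ.1)
      (hδ.2.trans_lt (by linarith [pi_pos]))).ne').continuousAt.continuousWithinAt
  obtain ⟨δ, hδ, hδd⟩ := intermediate_value_Icc (min_le_left _ _) hcont ⟨hfa, hle⟩
  exact ⟨δ, ⟨ha.trans_le hδ.1, hδ.2⟩, hδd⟩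

lemma deltaFun_nonpos {p q δ : ℝ} (hp : 0 < p) (hq : 0 ≤ q) (h0 : δ ≤ 0) (h2 : -(2 * π) < δ) :
    deltaFun p q δ ≤ 0 := by
  rcases h0.lt_or_eq with hneg | rfl
  · have := deltaFun_pos hp hq (neg_pos.2 hneg) (by linarith)
    rw [deltaFun_neg] at this
    linarith
  · simp [deltaFun]

lemma eq_of_deltaFun_eq {p q δ δ' : ℝ} (hp : 0 < p) (hq : 0 ≤ q) (hδ : δ ∈ Ioo 0 (2 * π))
    (hδ' : δ' ∈ Ioo (-(2 * π)) (2 * π)) (h : deltaFun p q δ' = deltaFun p q δ) : δ' = δ := by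
  rcases le_or_gt δ' 0 with hneg | hpos
  · have := deltaFun_nonpos hp hq hneg hδ'.1
    linarith [deltaFun_pos hp hq hδ.1 hδ.2]
  · exact (strictMonoOn_deltaFun hp hq).injOn ⟨hpos, hδ'.2⟩ hδ h

lemma exists_unique_deltaFun_eq {p q d : ℝ} (hp : 0 < p) (hq : 0 ≤ q) (hd : d ≠ 0)
    (hle : |d| ≤ deltaFun p q π) :
    ∃ δ, δ ≠ 0 ∧ |δ| ≤ π ∧ deltaFun p q δ = d ∧
      ∀ δ' ∈ Ioo (-(2 * π)) (2 * π), deltaFun p q δ' = d → δ' = δ := by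
  wlog hpos : 0 < d generalizing d
  · obtain ⟨δ, hδ0, hδπ, hδd, huniq⟩ :=
      this (neg_ne_zero.2 hd) (by rwa [abs_neg]) (neg_pos.2 ((not_lt.1 hpos).lt_of_ne hd))
    refine ⟨-δ, neg_ne_zero.2 hδ0, by rwa [abs_neg], by rw [deltaFun_neg, hδd, neg_neg], ?_⟩
    intro δ' hδ' hδ'd
    have := huniq (-δ') ⟨by linarith [hδ'.2], by linarith [hδ'.1]⟩ (by rw [deltaFun_neg, hδ'd])
    linarith
  rw [abs_of_pos hpos] at hle
  obtain ⟨δ, hδ, hδd⟩ := exists_deltaFun_eq hp hq hpos hle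
  have hδ2 : δ ∈ Ioo 0 (2 * π) := ⟨hδ.1, by linarith [hδ.2, pi_pos]⟩
  refine ⟨δ, hδ.1.ne', by rw [abs_of_pos hδ.1]; exact hδ.2, hδd, fun δ' hδ' hδ'd => ?_⟩
  exact eq_of_deltaFun_eq hp hq hδ2 hδ' (hδ'd.trans hδd.symm)

noncomputable def dualProfile (d p q δ : ℝ) : ℝ :=
  d * δ + δ * (p * cos (δ / 2) - q) / sin (δ / 2)

noncomputable def dualValue (p q δ : ℝ) : ℝ :=
  δ ^ 2 * (p - q * cos (δ / 2)) / (2 * sin (δ / 2) ^ 2)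

lemma hasDerivAt_dualProfile (d p q : ℝ) {δ : ℝ} (hs : sin (δ / 2) ≠ 0) :
    HasDerivAt (dualProfile d p q) (d - deltaFun p q δ) δ := by
  have h := ((hasDerivAt_id δ).const_mul d).add
    (((hasDerivAt_id δ).fun_mul (((hasDerivAt_cos_half δ).const_mul p).sub_const q)).div
      (hasDerivAt_sin_half δ) hs)
  refine h.congr_deriv ?_
  rw [deltaFun, sin_eq_two_mul_sin_half_mul_cos_half δ, id]
  field_simp
  linear_combination (-p * δ) * sin_sq_add_cos_sq (δ / 2)

lemma dualProfile_eq_dualValue {d p q δ : ℝ} (hs : sin (δ / 2) ≠ 0)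
    (h : deltaFun p q δ = d) : dualProfile d p q δ = dualValue p q δ := by
  rw [dualProfile, dualValue, ← h, deltaFun, sin_eq_two_mul_sin_half_mul_cos_half δ]
  field_simp
  ring

lemma dualProfile_neg_le {d p q δ : ℝ} (hd : 0 ≤ d) (hδ : 0 ≤ δ) :
    dualProfile d p q (-δ) ≤ dualProfile d p q δ := by
  simp only [dualProfile, neg_div, cos_neg, sin_neg, div_neg, neg_mul, neg_neg]
  nlinarith

lemma isMaxOn_dualProfile {d p q δ : ℝ} (hp : 0 < p) (hq : 0 ≤ q) (hδ : δ ∈ Ioc 0 π)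
    (h : deltaFun p q δ = d) : IsMaxOn (dualProfile d p q) (Ioc 0 π) δ := by
  have hderiv : ∀ x ∈ Ioo 0 (2 * π), HasDerivAt (dualProfile d p q) (d - deltaFun p q x) x :=
    fun x hx => hasDerivAt_dualProfile d p q (sin_half_pos hx.1 hx.2).ne'
  have hdiff : DifferentiableOn ℝ (dualProfile d p q) (Ioo 0 (2 * π)) :=
    fun x hx => (hderiv x hx).differentiableAt.differentiableWithinAt
  have hδ2 : δ ∈ Ioo 0 (2 * π) := ⟨hδ.1, by linarith [hδ.2, pi_pos]⟩
  have hleft : Ioc 0 δ ⊆ Ioo 0 (2 * π) := fun x hx => ⟨hx.1, hx.2.trans_lt hδ2.2⟩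
  have hright : Icc δ π ⊆ Ioo 0 (2 * π) :=
    fun x hx => ⟨hδ.1.trans_le hx.1, by linarith [hx.2, pi_pos]⟩
  have hmono : MonotoneOn (dualProfile d p q) (Ioc 0 δ) := by
    refine monotoneOn_of_deriv_nonneg (convex_Ioc 0 δ) (hdiff.continuousOn.mono hleft)
      (hdiff.mono (interior_subset.trans hleft)) fun x hx => ?_
    rw [interior_Ioc] at hx
    have hx2 := hleft (Ioo_subset_Ioc_self hx)
    rw [(hderiv x hx2).deriv, sub_nonneg, ← h]
    exact (strictMonoOn_deltaFun hp hq hx2 hδ2 hx.2).le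
  have hanti : AntitoneOn (dualProfile d p q) (Icc δ π) := by
    refine antitoneOn_of_deriv_nonpos (convex_Icc δ π) (hdiff.continuousOn.mono hright)
      (hdiff.mono (interior_subset.trans hright)) fun x hx => ?_
    rw [interior_Icc] at hx
    have hx2 := hright (Ioo_subset_Icc_self hx)
    rw [(hderiv x hx2).deriv, sub_nonpos, ← h]
    exact (strictMonoOn_deltaFun hp hq hδ2 hx2 hx.1).le
  intro x hx
  rcases le_total x δ with hxδ | hδx
  · exact hmono ⟨hx.1, hxδ⟩ ⟨hδ.1, le_rfl⟩ hxδ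
  · exact hanti ⟨le_rfl, hδ.2⟩ ⟨hδx, hx.2⟩ hδx

lemma two_mul_sub_le_dualValue {p q δ : ℝ} (hq : 0 ≤ q) (hqp : q ≤ p) (h0 : 0 < δ)
    (h2 : δ < 2 * π) : 2 * (p - q) ≤ dualValue p q δ := by
  have hs := sin_half_pos h0 h2
  have hsq : sin (δ / 2) ^ 2 ≤ (δ / 2) ^ 2 := sin_sq_le_sq
  have hcos : q * cos (δ / 2) ≤ q := mul_le_of_le_one_right hq (cos_le_one _)
  rw [dualValue, le_div_iff₀ (by positivity)]
  nlinarith [mul_le_mul_of_nonneg_left hsq (by linarith : (0 : ℝ) ≤ p - q * cos (δ / 2))]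

lemma coe_sub_Lam_eq {x0 x1 y0 y1 δ γ : ℝ} (hδ0 : δ ≠ 0) (hδ : |δ| < π) :
    ((x1 * δ + y1 * γ : ℝ) : EReal) - Lam x0 y0 δ γ =
      ((dualProfile (x1 - x0) (y1 ^ 2 + y0 ^ 2) (2 * y1 * y0) δ -
        (sin (δ / 2) * γ - 2 * δ * (y1 * cos (δ / 2) - y0)) ^ 2 /
          (4 * δ * sin (δ / 2) * cos (δ / 2)) : ℝ) : EReal) := by
  have hs : sin (δ / 2) ≠ 0 := fun h => by
    simpa [h] using mul_sin_half_pos hδ0 (by linarith [pi_pos])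
  have hc := (cos_half_pos hδ).ne'
  rw [Lam, if_pos hδ, if_neg hδ0, ← EReal.coe_sub, EReal.coe_eq_coe_iff, dualProfile]
  field_simp
  linear_combination (-4 * δ ^ 2 * y0 ^ 2) * sin_sq_add_cos_sq (δ / 2)

lemma coe_sub_Lam_le_dualProfile {x0 x1 y0 y1 δ γ : ℝ} (hδ0 : δ ≠ 0) (hδ : |δ| < π) :
    ((x1 * δ + y1 * γ : ℝ) : EReal) - Lam x0 y0 δ γ ≤
      dualProfile (x1 - x0) (y1 ^ 2 + y0 ^ 2) (2 * y1 * y0) δ := by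
  rw [coe_sub_Lam_eq hδ0 hδ, EReal.coe_le_coe_iff, sub_le_self_iff]
  have := mul_sin_half_pos hδ0 (by linarith [pi_pos])
  have := cos_half_pos hδ
  exact div_nonneg (sq_nonneg _) (by rw [mul_assoc 4, mul_assoc]; positivity)

lemma dualProfile_le_LamStar {x0 x1 y0 y1 δ : ℝ} (h0 : 0 < δ) (hπ : δ < π) :
    (dualProfile (x1 - x0) (y1 ^ 2 + y0 ^ 2) (2 * y1 * y0) δ : EReal) ≤ LamStar x0 y0 x1 y1 := by
  have hs := sin_half_pos h0 (by linarith)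
  refine le_iSup_of_le (δ, 2 * δ * (y1 * cos (δ / 2) - y0) / sin (δ / 2)) (le_of_eq ?_)
  rw [coe_sub_Lam_eq h0.ne' (by rwa [abs_of_pos h0]), mul_div_cancel₀ _ hs.ne']
  simp

lemma LamStar_le_dualValue {x0 x1 y0 y1 δ : ℝ} (hy0 : 0 ≤ y0) (hy1 : 0 ≤ y1)
    (hp : 0 < y1 ^ 2 + y0 ^ 2) (hδ : δ ∈ Ioc 0 π)
    (h : deltaFun (y1 ^ 2 + y0 ^ 2) (2 * y1 * y0) δ = x1 - x0) :
    LamStar x0 y0 x1 y1 ≤ dualValue (y1 ^ 2 + y0 ^ 2) (2 * y1 * y0) δ := by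
  have hq : 0 ≤ 2 * y1 * y0 := by positivity
  have hδ2 : δ < 2 * π := by linarith [hδ.2, pi_pos]
  have hd : 0 ≤ x1 - x0 := h ▸ (deltaFun_pos hp hq hδ.1 hδ2).le
  have hmax := isMaxOn_dualProfile hp hq hδ h
  rw [← dualProfile_eq_dualValue (sin_half_pos hδ.1 hδ2).ne' h]
  refine iSup_le fun ⟨δ', γ⟩ => ?_
  by_cases hπ : |δ'| < π
  swap
  · simp [Lam, hπ]
  by_cases h0 : δ' = 0
  · subst h0
    have := two_mul_sub_le_dualValue (p := y1 ^ 2 + y0 ^ 2) hq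
      (by nlinarith [sq_nonneg (y1 - y0)]) hδ.1 hδ2
    rw [Lam, if_pos hπ, if_pos rfl, ← EReal.coe_sub, EReal.coe_le_coe_iff,
      dualProfile_eq_dualValue (sin_half_pos hδ.1 hδ2).ne' h]
    nlinarith [sq_nonneg (γ - 4 * (y1 - y0))]
  refine (coe_sub_Lam_le_dualProfile h0 hπ).trans (EReal.coe_le_coe_iff.2 ?_)
  have habs : 0 < |δ'| := abs_pos.2 h0
  calc dualProfile (x1 - x0) _ _ δ' ≤ dualProfile (x1 - x0) _ _ |δ'| := by
        rcases le_total 0 δ' with hpos | hneg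
        · rw [abs_of_nonneg hpos]
        · simpa [abs_of_nonpos hneg] using dualProfile_neg_le hd (neg_nonneg.2 hneg)
    _ ≤ dualProfile (x1 - x0) _ _ δ := hmax ⟨habs, hπ.le⟩

lemma dualValue_le_LamStar {x0 x1 y0 y1 δ : ℝ} (hδ : δ ∈ Ioc 0 π)
    (h : deltaFun (y1 ^ 2 + y0 ^ 2) (2 * y1 * y0) δ = x1 - x0) :
    (dualValue (y1 ^ 2 + y0 ^ 2) (2 * y1 * y0) δ : EReal) ≤ LamStar x0 y0 x1 y1 := by
  have hs := (sin_half_pos hδ.1 (by linarith [hδ.2, pi_pos])).ne'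
  rw [← dualProfile_eq_dualValue hs h]
  have hlim : Tendsto (fun u => (dualProfile (x1 - x0) (y1 ^ 2 + y0 ^ 2) (2 * y1 * y0) u : EReal))
      (𝓝[<] δ) (𝓝 (dualProfile (x1 - x0) (y1 ^ 2 + y0 ^ 2) (2 * y1 * y0) δ)) :=
    (continuous_coe_real_ereal.tendsto _).comp
      ((hasDerivAt_dualProfile _ _ _ hs).continuousAt.tendsto.mono_left nhdsWithin_le_nhds)
  refine le_of_tendsto hlim ?_
  filter_upwards [Ioo_mem_nhdsLT hδ.1] with u hu
  exact dualProfile_le_LamStar hu.1 (hu.2.trans_le hδ.2)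

lemma Lam_neg (x0 y0 δ γ : ℝ) : Lam (-x0) y0 (-δ) γ = Lam x0 y0 δ γ := by
  simp only [Lam, abs_neg, neg_eq_zero, neg_div, sin_neg, cos_neg]
  split_ifs <;> first | rfl | (congr 1; ring)

lemma LamStar_neg (x0 y0 x1 y1 : ℝ) : LamStar (-x0) y0 (-x1) y1 = LamStar x0 y0 x1 y1 := by
  rw [LamStar, LamStar, ← ((Equiv.neg ℝ).prodCongr (Equiv.refl ℝ)).iSup_comp]
  congr 1
  ext ⟨δ, γ⟩
  simp [Lam_neg]

lemma dualValue_neg (p q δ : ℝ) : dualValue p q (-δ) = dualValue p q δ := by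
  simp [dualValue, neg_div]

lemma LamStar_eq_dualValue {x0 x1 y0 y1 δ : ℝ} (hy0 : 0 ≤ y0) (hy1 : 0 ≤ y1)
    (hp : 0 < y1 ^ 2 + y0 ^ 2) (hδ0 : δ ≠ 0) (hδ : |δ| ≤ π)
    (h : deltaFun (y1 ^ 2 + y0 ^ 2) (2 * y1 * y0) δ = x1 - x0) :
    LamStar x0 y0 x1 y1 = dualValue (y1 ^ 2 + y0 ^ 2) (2 * y1 * y0) δ := by
  wlog hpos : 0 < δ generalizing x0 x1 δ
  · have := this (x0 := -x0) (x1 := -x1) (neg_ne_zero.2 hδ0) (by rwa [abs_neg])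
      (by rw [deltaFun_neg, h]; ring) (neg_pos.2 ((not_lt.1 hpos).lt_of_ne hδ0))
    rwa [LamStar_neg, dualValue_neg] at this
  have hδ' : δ ∈ Ioc 0 π := ⟨hpos, (le_abs_self δ).trans hδ⟩
  exact le_antisymm (LamStar_le_dualValue hy0 hy1 hp hδ' h) (dualValue_le_LamStar hδ' h)

/-- Theorem: in the close δ-regime, the unique solution `δ* ∈ (−2π, 2π)` of
`f(δ, y₀², y₁²) = x₁ − x₀` lies in `[−π, π] \{0}`, and
`Λ*(x₀,y₀,x₁,y₁) = (δ*)²·(y₁² + y₀² − 2y₁y₀·cos(δ*/2)) / (2·sin²(δ*/2))`. -/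
theorem legendre_transform_close_regime (x0 x1 y0 y1 : ℝ) (hx : x0 ≠ x1)
    (hy0 : 0 ≤ y0) (hy1 : 0 ≤ y1) (hy : ¬(y0 = 0 ∧ y1 = 0))
    (hclose : |x1 - x0| ≤ 1 / 2 * (Real.pi * (y1 ^ 2 + y0 ^ 2) + 4 * y1 * y0)) :
    ∃ δ ∈ Set.Ioo (-(2 * Real.pi)) (2 * Real.pi), fdelta δ (y0 ^ 2) (y1 ^ 2) = x1 - x0 ∧
      (∀ δ' ∈ Set.Ioo (-(2 * Real.pi)) (2 * Real.pi),
        fdelta δ' (y0 ^ 2) (y1 ^ 2) = x1 - x0 → δ' = δ) ∧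
      -Real.pi ≤ δ ∧ δ ≤ Real.pi ∧ δ ≠ 0 ∧
      LamStar x0 y0 x1 y1 =
        ((δ ^ 2 * (y1 ^ 2 + y0 ^ 2 - 2 * y1 * y0 * Real.cos (δ / 2)) /
          (2 * Real.sin (δ / 2) ^ 2) : ℝ) : EReal) := by
  have hp : 0 < y1 ^ 2 + y0 ^ 2 := by
    by_contra! h
    exact hy ⟨by nlinarith, by nlinarith⟩
  have hle : |x1 - x0| ≤ deltaFun (y1 ^ 2 + y0 ^ 2) (2 * y1 * y0) π := by
    rw [deltaFun_pi]
    linarith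
  obtain ⟨δ, hδ0, hδπ, hδd, huniq⟩ :=
    exists_unique_deltaFun_eq hp (by positivity) (sub_ne_zero.2 hx.symm) hle
  simp only [fdelta_sq_eq hy0 hy1]
  obtain ⟨hlo, hhi⟩ := abs_le.1 hδπ
  exact ⟨δ, ⟨by linarith [pi_pos], by linarith [pi_pos]⟩, hδd, huniq, hlo, hhi, hδ0,
    LamStar_eq_dualValue hy0 hy1 hp hδ0 hδπ hδd⟩
end

section
/- Let 0 ≤ v₀ < v₁. Then the function C ↦ F(v₀, v₁, C) is strictly increasing on the interval [0, v₁^(−1/2)) and convex on the interval (0, v₁^(−1/2)). -/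
/-!
Differentiating in `v` gives `∂F̄/∂v (v, C) = C√v / √(1 − C²v) = k(C√v)` with `k x = x / √(1 − x²)`,
so `F(v₀, v₁, C) = ∫_{v₀}^{v₁} k(C√v) dv`. The function `k` is strictly increasing on `(−1, 1)` and
convex on `[0, 1)`, where `k' = (1 − x²)^(−3/2)` increases. Both properties pass through the
substitution `x = C√v` and the integration over `v`; strictness holds because `√v₁ > 0`.
-/

/-- The function `F̄(v, C) = arcsin(C√v)/C² − √v·√(1 − C²v)/C`. -/
noncomputable def Fbar (v C : ℝ) : ℝ :=
  Real.arcsin (C * Real.sqrt v) / C ^ 2 - Real.sqrt v * Real.sqrt (1 - C ^ 2 * v) / C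

/-- `F(v₀, v₁, C) = F̄(v₁, C) − F̄(v₀, C)`; note that `F(v₀, v₁, 0) = 0`. -/
noncomputable def F (v0 v1 C : ℝ) : ℝ := Fbar v1 C - Fbar v0 C

open Real Set MeasureTheory

lemma convexOn_intervalIntegral {E : Type*} [AddCommGroup E] [Module ℝ E] {s : Set E}
    {g : ℝ → E → ℝ} {a b : ℝ} (hab : a ≤ b)
    (hg : ∀ x ∈ s, IntervalIntegrable (g · x) volume a b)
    (hconv : ∀ t ∈ Icc a b, ConvexOn ℝ s (g t)) :
    ConvexOn ℝ s (fun x => ∫ t in a..b, g t x) := by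
  have hs : Convex ℝ s := (hconv a (left_mem_Icc.2 hab)).1
  refine ⟨hs, fun x hx y hy p q hp hq hpq => ?_⟩
  simp only [smul_eq_mul]
  calc ∫ t in a..b, g t (p • x + q • y)
      ≤ ∫ t in a..b, (p * g t x + q * g t y) :=
        intervalIntegral.integral_mono_on hab (hg _ (hs hx hy hp hq hpq))
          (((hg x hx).const_mul p).add ((hg y hy).const_mul q))
          fun t ht => (hconv t ht).2 hx hy hp hq hpq
    _ = p * (∫ t in a..b, g t x) + q * ∫ t in a..b, g t y := by
        rw [intervalIntegral.integral_add ((hg x hx).const_mul p) ((hg y hy).const_mul q),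
          intervalIntegral.integral_const_mul, intervalIntegral.integral_const_mul]

lemma strictMonoOn_intervalIntegral {α : Type*} [Preorder α] {s : Set α} {g : ℝ → α → ℝ}
    {a b : ℝ} (hab : a < b) (hg : ∀ x ∈ s, ContinuousOn (g · x) (Icc a b))
    (hmono : ∀ t ∈ Icc a b, MonotoneOn (g t) s) (hstrict : ∃ t ∈ Icc a b, StrictMonoOn (g t) s) :
    StrictMonoOn (fun x => ∫ t in a..b, g t x) s := by
  obtain ⟨t, ht, hgt⟩ := hstrict
  intro x hx y hy hxy
  exact intervalIntegral.integral_lt_integral_of_continuousOn_of_le_of_exists_lt hab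
    (hg x hx) (hg y hy) (fun u hu => hmono u (Ioc_subset_Icc_self hu) hx hy hxy.le)
    ⟨t, ht, hgt hx hy hxy⟩

lemma hasDerivAt_div_sqrt_one_sub_sq {x : ℝ} (hx : x ∈ Ioo (-1) 1) :
    HasDerivAt (fun x => x / √(1 - x ^ 2)) (√(1 - x ^ 2) ^ 3)⁻¹ x := by
  have hpos : 0 < 1 - x ^ 2 := by nlinarith [hx.1, hx.2]
  have hsqrt : HasDerivAt (fun x => √(1 - x ^ 2)) (-(2 * x) / (2 * √(1 - x ^ 2))) x := by
    simpa using ((hasDerivAt_pow 2 x).const_sub 1).sqrt hpos.ne'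
  refine ((hasDerivAt_id' x).fun_div hsqrt (sqrt_pos.2 hpos).ne').congr_deriv ?_
  have := sq_sqrt hpos.le
  field_simp
  linear_combination this

lemma strictMonoOn_div_sqrt_one_sub_sq :
    StrictMonoOn (fun x => x / √(1 - x ^ 2)) (Ioo (-1) 1) :=
  strictMonoOn_of_hasDerivWithinAt_pos (convex_Ioo _ _)
    (fun x hx => (hasDerivAt_div_sqrt_one_sub_sq hx).continuousAt.continuousWithinAt)
    (fun x hx => (hasDerivAt_div_sqrt_one_sub_sq (interior_subset hx)).hasDerivWithinAt)
    (fun x hx => by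
      have : 0 < 1 - x ^ 2 := by
        rw [interior_Ioo] at hx; nlinarith [hx.1, hx.2]
      positivity)

lemma convexOn_div_sqrt_one_sub_sq : ConvexOn ℝ (Ico 0 1) (fun x => x / √(1 - x ^ 2)) := by
  have hsub : Ico (0 : ℝ) 1 ⊆ Ioo (-1) 1 := Ico_subset_Ioo_left (by norm_num)
  refine MonotoneOn.convexOn_of_deriv (convex_Ico 0 1)
    (fun x hx => (hasDerivAt_div_sqrt_one_sub_sq (hsub hx)).continuousAt.continuousWithinAt)
    (fun x hx => (hasDerivAt_div_sqrt_one_sub_sq (hsub (interior_subset hx))).differentiableAt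
      |>.differentiableWithinAt) ?_
  rw [interior_Ico]
  intro x hx y hy hxy
  rw [(hasDerivAt_div_sqrt_one_sub_sq (hsub (Ioo_subset_Ico_self hx))).deriv,
    (hasDerivAt_div_sqrt_one_sub_sq (hsub (Ioo_subset_Ico_self hy))).deriv]
  have hy2 : 0 < 1 - y ^ 2 := by nlinarith [hy.1, hy.2]
  gcongr
  nlinarith [hx.1]

noncomputable def FbarDeriv (v C : ℝ) : ℝ := C * √v / √(1 - (C * √v) ^ 2)

lemma hasDerivAt_Fbar {v C : ℝ} (hC : C ≠ 0) (hv : 0 < v) (hCv : C ^ 2 * v < 1) :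
    HasDerivAt (fun v => Fbar v C) (FbarDeriv v C) v := by
  have hw : 0 < 1 - C ^ 2 * v := by linarith
  have hCsv : (C * √v) ^ 2 = C ^ 2 * v := by rw [mul_pow, sq_sqrt hv.le]
  have hsqrt : HasDerivAt (√·) (1 / (2 * √v)) v := by
    simpa using hasDerivAt_sqrt hv.ne'
  have harcsin := (hasDerivAt_arcsin (x := C * √v) (by nlinarith) (by nlinarith)).comp v
    (hsqrt.const_mul C)
  have hroot :
      HasDerivAt (fun v => √(1 - C ^ 2 * v)) (-(C ^ 2 * 1) / (2 * √(1 - C ^ 2 * v))) v :=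
    (((hasDerivAt_id' v).const_mul (C ^ 2)).const_sub 1).sqrt hw.ne'
  refine ((harcsin.div_const (C ^ 2)).fun_sub ((hsqrt.fun_mul hroot).div_const C)).congr_deriv ?_
  rw [FbarDeriv, hCsv]
  have h1 := sq_sqrt hv.le
  have h2 := sq_sqrt hw.le
  field_simp
  linear_combination -h2 - C ^ 2 * h1

lemma continuousOn_FbarDeriv {v1 C : ℝ} (hC : C ^ 2 * v1 < 1) :
    ContinuousOn (FbarDeriv · C) (Icc 0 v1) := by
  refine ContinuousOn.div (by fun_prop) (by fun_prop) fun v hv => (sqrt_pos.2 ?_).ne'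
  rw [mul_pow, sq_sqrt hv.1]
  nlinarith [hv.2]

lemma F_eq_integral {v0 v1 C : ℝ} (hv0 : 0 ≤ v0) (hv : v0 ≤ v1) (hC : C ^ 2 * v1 < 1) :
    F v0 v1 C = ∫ v in v0..v1, FbarDeriv v C := by
  rcases eq_or_ne C 0 with rfl | hC0
  · simp [F, Fbar, FbarDeriv]
  have hCv : ∀ v ∈ Icc v0 v1, C ^ 2 * v < 1 := fun v hv' =>
    (mul_le_mul_of_nonneg_left hv'.2 (sq_nonneg C)).trans_lt hC
  rw [F, intervalIntegral.integral_eq_sub_of_hasDerivAt_of_le hv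
    (by unfold Fbar; fun_prop : Continuous fun v => Fbar v C).continuousOn
    (fun v hv' => hasDerivAt_Fbar hC0 (hv0.trans_lt hv'.1) (hCv v (Ioo_subset_Icc_self hv')))
    (((continuousOn_FbarDeriv hC).mono (Icc_subset_Icc_left hv0)).intervalIntegrable_of_Icc hv)]

section

variable {v1 v C : ℝ}

lemma mul_sqrt_mem_Ico (hC : C ∈ Ico 0 (√v1)⁻¹) (hv : v ∈ Icc 0 v1) : C * √v ∈ Ico 0 1 := by
  have hs1 : 0 < √v1 := inv_pos.1 (hC.1.trans_lt hC.2)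
  refine ⟨mul_nonneg hC.1 (sqrt_nonneg v), ?_⟩
  calc C * √v ≤ C * √v1 := mul_le_mul_of_nonneg_left (sqrt_le_sqrt hv.2) hC.1
    _ < (√v1)⁻¹ * √v1 := mul_lt_mul_of_pos_right hC.2 hs1
    _ = 1 := inv_mul_cancel₀ hs1.ne'

lemma sq_mul_lt_one (hC : C ∈ Ico 0 (√v1)⁻¹) : C ^ 2 * v1 < 1 := by
  have hv1 : 0 ≤ v1 := sqrt_pos.1 (inv_pos.1 (hC.1.trans_lt hC.2)) |>.le
  have h := mul_sqrt_mem_Ico hC ⟨hv1, le_rfl⟩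
  nlinarith [sq_sqrt hv1, h.1, h.2]

lemma strictMonoOn_FbarDeriv (hv : v ∈ Ioc 0 v1) :
    StrictMonoOn (FbarDeriv v) (Ico 0 (√v1)⁻¹) := fun C hC C' hC' h =>
  have hIco : Ico (0 : ℝ) 1 ⊆ Ioo (-1) 1 := Ico_subset_Ioo_left (by norm_num)
  strictMonoOn_div_sqrt_one_sub_sq (hIco (mul_sqrt_mem_Ico hC (Ioc_subset_Icc_self hv)))
    (hIco (mul_sqrt_mem_Ico hC' (Ioc_subset_Icc_self hv)))
    (mul_lt_mul_of_pos_right h (sqrt_pos.2 hv.1))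

lemma monotoneOn_FbarDeriv (hv : v ∈ Icc 0 v1) :
    MonotoneOn (FbarDeriv v) (Ico 0 (√v1)⁻¹) := by
  rcases hv.1.eq_or_lt with rfl | hv0
  · intro C _ C' _ _
    simp [FbarDeriv]
  · exact (strictMonoOn_FbarDeriv ⟨hv0, hv.2⟩).monotoneOn

lemma convexOn_FbarDeriv (hv : v ∈ Icc 0 v1) : ConvexOn ℝ (Ioo 0 (√v1)⁻¹) (FbarDeriv v) :=
  (convexOn_div_sqrt_one_sub_sq.comp_linearMap (LinearMap.mulRight ℝ √v)).subset
    (fun _ hC => mul_sqrt_mem_Ico (Ioo_subset_Ico_self hC) hv) (convex_Ioo _ _)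

end

/-- Lemma: for `0 ≤ v₀ < v₁`, the function `C ↦ F(v₀, v₁, C)` is strictly increasing on
`[0, v₁^(-1/2))` and convex on `(0, v₁^(-1/2))`. -/
theorem F_strictMono_and_convex (v0 v1 : ℝ) (hv0 : 0 ≤ v0) (hv : v0 < v1) :
    StrictMonoOn (fun C => F v0 v1 C) (Set.Ico 0 (Real.sqrt v1)⁻¹) ∧
    ConvexOn ℝ (Set.Ioo 0 (Real.sqrt v1)⁻¹) (fun C => F v0 v1 C) := by
  have hsub : Icc v0 v1 ⊆ Icc 0 v1 := Icc_subset_Icc_left hv0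
  have hrep : EqOn (fun C => ∫ v in v0..v1, FbarDeriv v C) (fun C => F v0 v1 C)
      (Ico 0 (√v1)⁻¹) := fun C hC => (F_eq_integral hv0 hv.le (sq_mul_lt_one hC)).symm
  have hcont : ∀ C ∈ Ico 0 (√v1)⁻¹, ContinuousOn (FbarDeriv · C) (Icc v0 v1) := fun C hC =>
    (continuousOn_FbarDeriv (sq_mul_lt_one hC)).mono hsub
  have hstrict : StrictMonoOn (FbarDeriv v1) (Ico 0 (√v1)⁻¹) :=
    strictMonoOn_FbarDeriv ⟨hv0.trans_lt hv, le_rfl⟩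
  constructor
  · exact (strictMonoOn_intervalIntegral hv hcont (fun v hv' => monotoneOn_FbarDeriv (hsub hv'))
      ⟨v1, right_mem_Icc.2 hv.le, hstrict⟩).congr hrep
  · refine (convexOn_intervalIntegral hv.le (fun C hC => ?_)
      (fun v hv' => convexOn_FbarDeriv (hsub hv'))).congr (hrep.mono Ioo_subset_Ico_self)
    exact (hcont C (Ioo_subset_Ico_self hC)).intervalIntegrable_of_Icc hv.le
end

section
/- Let 0 ≤ v₀ < v₁. Then the function C ↦ F̃(v₀, v₁, C) is strictly decreasing on the interval (0, v₁^(−1/2)). Moreover, there exists ε > 0 such that F̃(v₀,v₁,·) is convex on (0, ε) and concave on (v₁^(−1/2) − ε, v₁^(−1/2)). -/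
/-- The far-point function
`F̃(v₀,v₁,C) = √v₀·√(1−C²v₀)/C + arccos(C√v₀)/C² + √v₁·√(1−C²v₁)/C + arccos(C√v₁)/C²`. -/
noncomputable def Ftilde (v0 v1 C : ℝ) : ℝ :=
  Real.sqrt v0 * Real.sqrt (1 - C ^ 2 * v0) / C + Real.arccos (C * Real.sqrt v0) / C ^ 2 +
  Real.sqrt v1 * Real.sqrt (1 - C ^ 2 * v1) / C + Real.arccos (C * Real.sqrt v1) / C ^ 2

/-!
`F̃(v₀, v₁, ·) = farTerm √v₀ + farTerm √v₁`, and each `farTerm a` has negative derivative on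
`(0, 1/a)`. Both summands of the second derivative `farTermDeriv2 a` are nonnegative while
`(Ca)² ≤ 3/4`, which gives convexity near `0`. As `C ↑ 1/√v₁` the second derivative of
`farTerm √v₁` tends to `-∞` (its numerator tends to `-2√v₁`, the square root to `0`), while that
of `farTerm √v₀` stays bounded since `√v₀ < √v₁`; this gives concavity near `1/√v₁`.
-/

open Real Filter Topology Set

noncomputable def farTerm (a C : ℝ) : ℝ :=
  a * √(1 - (C * a) ^ 2) / C + arccos (C * a) / C ^ 2

noncomputable def farTermDeriv (a C : ℝ) : ℝ :=
  -2 * (a / (C ^ 2 * √(1 - (C * a) ^ 2)) + arccos (C * a) / C ^ 3)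

noncomputable def farTermDeriv2 (a C : ℝ) : ℝ :=
  (6 * a - 8 * a ^ 3 * C ^ 2) / C ^ 3 / √(1 - (C * a) ^ 2) ^ 3 + 6 * arccos (C * a) / C ^ 4

lemma Ftilde_eq_farTerm_add {v0 v1 : ℝ} (hv0 : 0 ≤ v0) (hv1 : 0 ≤ v1) (C : ℝ) :
    Ftilde v0 v1 C = farTerm √v0 C + farTerm √v1 C := by
  simp only [Ftilde, farTerm, mul_pow, sq_sqrt hv0, sq_sqrt hv1]
  ring

lemma mul_lt_one_of_mem_Ioo_inv {a b C : ℝ} (hab : a ≤ b) (hC : C ∈ Ioo 0 b⁻¹) :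
    C * a < 1 := by
  have hb : 0 < b := inv_pos.1 (hC.1.trans hC.2)
  calc C * a ≤ C * b := mul_le_mul_of_nonneg_left hab hC.1.le
    _ < 1 := (lt_div_iff₀ hb).1 (by rw [one_div]; exact hC.2)

lemma sq_mul_lt_one_of_mem_Ioo_inv {a b C : ℝ} (ha : 0 ≤ a) (hab : a ≤ b)
    (hC : C ∈ Ioo 0 b⁻¹) : (C * a) ^ 2 < 1 :=
  pow_lt_one₀ (mul_nonneg hC.1.le ha) (mul_lt_one_of_mem_Ioo_inv hab hC) two_ne_zero

section Derivatives

variable {a C : ℝ}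

lemma hasDerivAt_sqrt_one_sub_mul_sq (h : (C * a) ^ 2 < 1) :
    HasDerivAt (fun x => √(1 - (x * a) ^ 2)) (-(C * a ^ 2) / √(1 - (C * a) ^ 2)) C := by
  have hs : √(1 - (C * a) ^ 2) ≠ 0 := (sqrt_pos.2 (sub_pos.2 h)).ne'
  refine ((((hasDerivAt_mul_const a).pow 2).const_sub 1).sqrt (sub_pos.2 h).ne').congr_deriv ?_
  simp only [Pi.pow_apply]
  field_simp
  ring

lemma hasDerivAt_arccos_mul (h : (C * a) ^ 2 < 1) :
    HasDerivAt (fun x => arccos (x * a)) (-a / √(1 - (C * a) ^ 2)) C := by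
  have h' : |C * a| < 1 := by rwa [← sq_lt_one_iff_abs_lt_one]
  rw [abs_lt] at h'
  refine ((hasDerivAt_arccos h'.1.ne' h'.2.ne).comp C (hasDerivAt_mul_const a)).congr_deriv ?_
  ring

lemma hasDerivAt_farTerm (hC : C ≠ 0) (h : (C * a) ^ 2 < 1) :
    HasDerivAt (farTerm a) (farTermDeriv a C) C := by
  have hu : 0 < 1 - (C * a) ^ 2 := sub_pos.2 h
  have hs : √(1 - (C * a) ^ 2) ≠ 0 := (sqrt_pos.2 hu).ne'
  have hs2 : √(1 - (C * a) ^ 2) ^ 2 = 1 - (C * a) ^ 2 := sq_sqrt hu.le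
  refine ((((hasDerivAt_sqrt_one_sub_mul_sq h).const_mul a).div (hasDerivAt_id C) hC).add
    ((hasDerivAt_arccos_mul h).div (hasDerivAt_pow 2 C) (pow_ne_zero 2 hC))).congr_deriv ?_
  simp only [farTermDeriv, id]
  set s := √(1 - (C * a) ^ 2)
  field_simp
  linear_combination (-(a * C ^ 2)) * hs2

lemma hasDerivAt_farTermDeriv (hC : C ≠ 0) (h : (C * a) ^ 2 < 1) :
    HasDerivAt (farTermDeriv a) (farTermDeriv2 a C) C := by
  have hu : 0 < 1 - (C * a) ^ 2 := sub_pos.2 h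
  have hs : √(1 - (C * a) ^ 2) ≠ 0 := (sqrt_pos.2 hu).ne'
  have hs2 : √(1 - (C * a) ^ 2) ^ 2 = 1 - (C * a) ^ 2 := sq_sqrt hu.le
  refine ((((hasDerivAt_const C a).div ((hasDerivAt_pow 2 C).mul
    (hasDerivAt_sqrt_one_sub_mul_sq h)) (mul_ne_zero (pow_ne_zero 2 hC) hs)).add
    ((hasDerivAt_arccos_mul h).div (hasDerivAt_pow 3 C) (pow_ne_zero 3 hC))).const_mul
    (-2)).congr_deriv ?_
  simp only [farTermDeriv2, Pi.mul_apply]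
  set s := √(1 - (C * a) ^ 2)
  field_simp
  linear_combination (6 * C ^ 3 * a) * hs2

lemma farTermDeriv_neg (ha : 0 ≤ a) (hC : 0 < C) (hCa : C * a < 1) : farTermDeriv a C < 0 := by
  have harccos : 0 < arccos (C * a) := arccos_pos.2 hCa
  rw [farTermDeriv]
  linarith [show 0 ≤ a / (C ^ 2 * √(1 - (C * a) ^ 2)) by positivity,
    show 0 < arccos (C * a) / C ^ 3 by positivity]

lemma farTermDeriv2_nonneg (ha : 0 ≤ a) (hC : 0 < C) (h : 4 * (C * a) ^ 2 ≤ 3) :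
    0 ≤ farTermDeriv2 a C := by
  have hnum : 0 ≤ 6 * a - 8 * a ^ 3 * C ^ 2 := by nlinarith
  have harccos : 0 ≤ arccos (C * a) := arccos_nonneg _
  rw [farTermDeriv2]
  positivity

lemma continuousAt_farTermDeriv2 (hC : C ≠ 0) (h : (C * a) ^ 2 < 1) :
    ContinuousAt (farTermDeriv2 a) C := by
  have hs : √(1 - (C * a) ^ 2) ≠ 0 := (sqrt_pos.2 (sub_pos.2 h)).ne'
  unfold farTermDeriv2
  fun_prop (disch := positivity)

lemma tendsto_farTermDeriv2_atBot (ha : 0 < a) :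
    Tendsto (farTermDeriv2 a) (𝓝[<] a⁻¹) atBot := by
  have hnum : Tendsto (fun C => (6 * a - 8 * a ^ 3 * C ^ 2) / C ^ 3) (𝓝[<] a⁻¹)
      (𝓝 (-2 * a ^ 4)) := by
    have : ContinuousAt (fun C => (6 * a - 8 * a ^ 3 * C ^ 2) / C ^ 3) a⁻¹ := by
      fun_prop (disch := positivity)
    convert this.tendsto.mono_left nhdsWithin_le_nhds using 2
    field_simp
    ring
  have hden : Tendsto (fun C => √(1 - (C * a) ^ 2) ^ 3) (𝓝[<] a⁻¹) (𝓝[>] 0) := by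
    refine tendsto_nhdsWithin_iff.2 ⟨?_, ?_⟩
    · have : ContinuousAt (fun C => √(1 - (C * a) ^ 2) ^ 3) a⁻¹ := by fun_prop
      convert this.tendsto.mono_left nhdsWithin_le_nhds
      simp [ha.ne']
    · filter_upwards [Ioo_mem_nhdsLT (inv_pos.2 ha)] with C hC
      exact pow_pos (sqrt_pos.2 (sub_pos.2 (sq_mul_lt_one_of_mem_Ioo_inv ha.le le_rfl hC))) 3
  have harccos : ContinuousAt (fun C => 6 * arccos (C * a) / C ^ 4) a⁻¹ := by
    fun_prop (disch := positivity)
  refine ((hnum.neg_mul_atTop (by nlinarith [pow_pos ha 4])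
    (tendsto_inv_nhdsGT_zero.comp hden)).atBot_add
    (harccos.tendsto.mono_left nhdsWithin_le_nhds)).congr fun C => ?_
  simp only [farTermDeriv2, div_eq_mul_inv, Function.comp_apply]

end Derivatives

section SecondDerivativeTest

variable {s : Set ℝ} {f f' f'' : ℝ → ℝ}

lemma convexOn_of_hasDerivAt2_nonneg (hs : Convex ℝ s)
    (hf : ∀ x ∈ s, HasDerivAt f (f' x) x) (hf' : ∀ x ∈ s, HasDerivAt f' (f'' x) x)
    (hf'' : ∀ x ∈ s, 0 ≤ f'' x) : ConvexOn ℝ s f :=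
  convexOn_of_hasDerivWithinAt2_nonneg hs
    (fun x hx => (hf x hx).continuousAt.continuousWithinAt)
    (fun x hx => (hf x (interior_subset hx)).hasDerivWithinAt)
    (fun x hx => (hf' x (interior_subset hx)).hasDerivWithinAt)
    (fun x hx => hf'' x (interior_subset hx))

lemma concaveOn_of_hasDerivAt2_nonpos (hs : Convex ℝ s)
    (hf : ∀ x ∈ s, HasDerivAt f (f' x) x) (hf' : ∀ x ∈ s, HasDerivAt f' (f'' x) x)
    (hf'' : ∀ x ∈ s, f'' x ≤ 0) : ConcaveOn ℝ s f :=
  concaveOn_of_hasDerivWithinAt2_nonpos hs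
    (fun x hx => (hf x hx).continuousAt.continuousWithinAt)
    (fun x hx => (hf x (interior_subset hx)).hasDerivWithinAt)
    (fun x hx => (hf' x (interior_subset hx)).hasDerivWithinAt)
    (fun x hx => hf'' x (interior_subset hx))

end SecondDerivativeTest

section FarTermSum

variable {a0 a1 : ℝ}

lemma hasDerivAt_farTerm_add (ha0 : 0 ≤ a0) (ha01 : a0 ≤ a1) {C : ℝ} (hC : C ∈ Ioo 0 a1⁻¹) :
    HasDerivAt (fun C => farTerm a0 C + farTerm a1 C)
      (farTermDeriv a0 C + farTermDeriv a1 C) C :=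
  (hasDerivAt_farTerm hC.1.ne' (sq_mul_lt_one_of_mem_Ioo_inv ha0 ha01 hC)).add
    (hasDerivAt_farTerm hC.1.ne' (sq_mul_lt_one_of_mem_Ioo_inv (ha0.trans ha01) le_rfl hC))

lemma hasDerivAt_farTermDeriv_add (ha0 : 0 ≤ a0) (ha01 : a0 ≤ a1) {C : ℝ}
    (hC : C ∈ Ioo 0 a1⁻¹) :
    HasDerivAt (fun C => farTermDeriv a0 C + farTermDeriv a1 C)
      (farTermDeriv2 a0 C + farTermDeriv2 a1 C) C :=
  (hasDerivAt_farTermDeriv hC.1.ne' (sq_mul_lt_one_of_mem_Ioo_inv ha0 ha01 hC)).add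
    (hasDerivAt_farTermDeriv hC.1.ne' (sq_mul_lt_one_of_mem_Ioo_inv (ha0.trans ha01) le_rfl hC))

lemma strictAntiOn_farTerm_add (ha0 : 0 ≤ a0) (ha01 : a0 ≤ a1) :
    StrictAntiOn (fun C => farTerm a0 C + farTerm a1 C) (Ioo 0 a1⁻¹) := by
  refine strictAntiOn_of_hasDerivWithinAt_neg (convex_Ioo _ _)
    (fun C hC => (hasDerivAt_farTerm_add ha0 ha01 hC).continuousAt.continuousWithinAt)
    (fun C hC => (hasDerivAt_farTerm_add ha0 ha01 (interior_subset hC)).hasDerivWithinAt)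
    fun C hC => ?_
  rw [interior_Ioo] at hC
  exact add_neg (farTermDeriv_neg ha0 hC.1 (mul_lt_one_of_mem_Ioo_inv ha01 hC))
    (farTermDeriv_neg (ha0.trans ha01) hC.1 (mul_lt_one_of_mem_Ioo_inv le_rfl hC))

lemma convexOn_farTerm_add (ha0 : 0 ≤ a0) (ha01 : a0 ≤ a1) :
    ConvexOn ℝ (Ioo 0 (2 * a1)⁻¹) (fun C => farTerm a0 C + farTerm a1 C) := by
  have ha1 : 0 ≤ a1 := ha0.trans ha01
  have hsub : Ioo 0 (2 * a1)⁻¹ ⊆ Ioo 0 a1⁻¹ := fun C hC => by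
    have : 0 < a1 := by linarith [inv_pos.1 (hC.1.trans hC.2)]
    exact ⟨hC.1, hC.2.trans_le (inv_anti₀ this (by linarith))⟩
  have hsmall : ∀ a, 0 ≤ a → a ≤ a1 → ∀ C ∈ Ioo 0 (2 * a1)⁻¹, 4 * (C * a) ^ 2 ≤ 3 := by
    intro a ha haa1 C hC
    have := mul_lt_one_of_mem_Ioo_inv (by linarith : 2 * a ≤ 2 * a1) hC
    nlinarith [mul_nonneg hC.1.le ha]
  exact convexOn_of_hasDerivAt2_nonneg (convex_Ioo _ _)
    (fun C hC => hasDerivAt_farTerm_add ha0 ha01 (hsub hC))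
    (fun C hC => hasDerivAt_farTermDeriv_add ha0 ha01 (hsub hC))
    fun C hC => add_nonneg (farTermDeriv2_nonneg ha0 hC.1 (hsmall a0 ha0 ha01 C hC))
      (farTermDeriv2_nonneg ha1 hC.1 (hsmall a1 ha1 le_rfl C hC))

lemma exists_concaveOn_farTerm_add (ha0 : 0 ≤ a0) (ha01 : a0 < a1) :
    ∃ l < a1⁻¹, ConcaveOn ℝ (Ioo l a1⁻¹) (fun C => farTerm a0 C + farTerm a1 C) := by
  have ha1 : 0 < a1 := ha0.trans_lt ha01
  have hlt : (a1⁻¹ * a0) ^ 2 < 1 :=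
    pow_lt_one₀ (by positivity) ((inv_mul_lt_one₀ ha1).2 ha01) two_ne_zero
  have hlim : Tendsto (fun C => farTermDeriv2 a0 C + farTermDeriv2 a1 C) (𝓝[<] a1⁻¹) atBot :=
    ((continuousAt_farTermDeriv2 (inv_ne_zero ha1.ne') hlt).tendsto.mono_left
      nhdsWithin_le_nhds).add_atBot (tendsto_farTermDeriv2_atBot ha1)
  obtain ⟨l, hl, hsub⟩ := mem_nhdsLT_iff_exists_Ioo_subset.1
    (inter_mem (Ioo_mem_nhdsLT (inv_pos.2 ha1)) (hlim.eventually (eventually_lt_atBot 0)))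
  refine ⟨l, hl, concaveOn_of_hasDerivAt2_nonpos (convex_Ioo _ _)
    (fun C hC => hasDerivAt_farTerm_add ha0 ha01.le (hsub hC).1)
    (fun C hC => hasDerivAt_farTermDeriv_add ha0 ha01.le (hsub hC).1)
    fun C hC => (hsub hC).2.le⟩

end FarTermSum

/-- Lemma: for `0 ≤ v₀ < v₁`, the function `C ↦ F̃(v₀, v₁, C)` is strictly decreasing on
`(0, v₁^(-1/2))`; moreover it is convex near `0` and concave near `v₁^(-1/2)`. -/
theorem Ftilde_strictAnti_and_local_convexity (v0 v1 : ℝ) (hv0 : 0 ≤ v0) (hv : v0 < v1) :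
    StrictAntiOn (fun C => Ftilde v0 v1 C) (Set.Ioo 0 (Real.sqrt v1)⁻¹) ∧
    ∃ ε > 0, ConvexOn ℝ (Set.Ioo 0 ε) (fun C => Ftilde v0 v1 C) ∧
      ConcaveOn ℝ (Set.Ioo ((Real.sqrt v1)⁻¹ - ε) (Real.sqrt v1)⁻¹)
        (fun C => Ftilde v0 v1 C) := by
  have hv1 : 0 < v1 := hv0.trans_lt hv
  have hsqrt : √v0 < √v1 := sqrt_lt_sqrt hv0 hv
  simp only [Ftilde_eq_farTerm_add hv0 hv1.le]
  obtain ⟨l, hl, hconcave⟩ := exists_concaveOn_farTerm_add (sqrt_nonneg v0) hsqrt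
  have hε : 0 < min (2 * √v1)⁻¹ ((√v1)⁻¹ - l) := lt_min (by positivity) (sub_pos.2 hl)
  refine ⟨strictAntiOn_farTerm_add (sqrt_nonneg v0) hsqrt.le, _, hε, ?_, ?_⟩
  · exact (convexOn_farTerm_add (sqrt_nonneg v0) hsqrt.le).subset
      (Ioo_subset_Ioo_right (min_le_left _ _)) (convex_Ioo _ _)
  · exact hconcave.subset (Ioo_subset_Ioo_left
      (by linarith [min_le_right (2 * √v1)⁻¹ ((√v1)⁻¹ - l)]))
      (convex_Ioo _ _)
end

section
/- Let v₀, v₁ ≥ 0 be not both zero. Then the function δ ↦ f(δ, v₀, v₁) is strictly increasing on [0, 2π), convex on the interval (0, 2π), and maps (0, 2π) onto (0, ∞). -/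
/-!
With `t = δ / 2`, `a = (√v₁ - √v₀)² / 2 ≥ 0` and `b = (√v₁ + √v₀)² / 2 > 0` one has
`f(δ) = a P(t) + b Q(t)`, where `P(t) = (t - sin t) / (1 - cos t)` and
`Q(t) = (t + sin t) / (1 + cos t)`. On `(0, π)` both are increasing (`Q` strictly) and
convex: the sign of `P'` reduces to `t ≤ tan t` at `t / 2`, and that of `P''` to the
Cusa–Huygens inequality `3 sin t ≤ t (2 + cos t)`. Moreover `0 ≤ P ≤ Q`, so both tend to `0`
at `0⁺`, while `Q(t) → ∞` as `t → π⁻`; the intermediate value theorem gives the image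
`(0, ∞)`.
-/

open Real Set Filter Topology

section Rescale

variable {g : ℝ → ℝ} {c r : ℝ}

lemma div_mem_Ico_of_mem_Ico (hc : 0 < c) {x : ℝ} (hx : x ∈ Ico 0 (c * r)) :
    x / c ∈ Ico 0 r :=
  ⟨div_nonneg hx.1 hc.le, (div_lt_iff₀' hc).mpr hx.2⟩

lemma div_mem_Ioo_of_mem_Ioo (hc : 0 < c) {x : ℝ} (hx : x ∈ Ioo 0 (c * r)) :
    x / c ∈ Ioo 0 r :=
  ⟨div_pos hx.1 hc, (div_lt_iff₀' hc).mpr hx.2⟩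

lemma StrictMonoOn.comp_div_const (hg : StrictMonoOn g (Ico 0 r)) (hc : 0 < c) :
    StrictMonoOn (fun x => g (x / c)) (Ico 0 (c * r)) := fun _ hx _ hy hxy =>
  hg (div_mem_Ico_of_mem_Ico hc hx) (div_mem_Ico_of_mem_Ico hc hy) (div_lt_div_of_pos_right hxy hc)

lemma ConvexOn.comp_div_const (hg : ConvexOn ℝ (Ioo 0 r) g) (hc : 0 < c) :
    ConvexOn ℝ (Ioo 0 (c * r)) (fun x => g (x / c)) := by
  refine ⟨convex_Ioo _ _, fun x hx y hy a b ha hb hab => ?_⟩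
  have := hg.2 (div_mem_Ioo_of_mem_Ioo hc hx) (div_mem_Ioo_of_mem_Ioo hc hy) ha hb hab
  simpa only [smul_eq_mul, add_div, mul_div_assoc] using this

lemma image_comp_div_const_Ioo (hc : 0 < c) :
    (fun x => g (x / c)) '' Ioo 0 (c * r) = g '' Ioo 0 r := by
  refine Subset.antisymm ?_ ?_
  · rintro _ ⟨x, hx, rfl⟩
    exact mem_image_of_mem g (div_mem_Ioo_of_mem_Ioo hc hx)
  · rintro _ ⟨t, ht, rfl⟩
    refine ⟨c * t, ⟨mul_pos hc ht.1, mul_lt_mul_of_pos_left ht.2 hc⟩, ?_⟩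
    simp only [mul_div_cancel_left₀ t hc.ne']

end Rescale

namespace Fdelta

lemma one_sub_cos_pos {t : ℝ} (h0 : 0 < t) (hπ : t ≤ π) : 0 < 1 - cos t := by
  linarith [cos_zero ▸ cos_lt_cos_of_nonneg_of_le_pi le_rfl hπ h0]

lemma one_add_cos_pos {t : ℝ} (h0 : 0 ≤ t) (hπ : t < π) : 0 < 1 + cos t := by
  linarith [cos_pi ▸ cos_lt_cos_of_nonneg_of_le_pi h0 le_rfl hπ]

lemma mul_cos_le_sin {t : ℝ} (h0 : 0 ≤ t) (hπ : t ≤ π) : t * cos t ≤ sin t := by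
  rcases lt_or_ge t (π / 2) with ht | ht
  · have hc : 0 < cos t := cos_pos_of_mem_Ioo ⟨by linarith [pi_pos], ht⟩
    have := le_tan h0 ht
    rwa [tan_eq_sin_div_cos, le_div_iff₀ hc] at this
  · have hc : cos t ≤ 0 := cos_nonpos_of_pi_div_two_le_of_le ht (by linarith)
    nlinarith [sin_nonneg_of_nonneg_of_le_pi h0 hπ]

lemma mul_sin_le_two_mul_one_sub_cos {t : ℝ} (h0 : 0 ≤ t) (h2π : t ≤ 2 * π) :
    t * sin t ≤ 2 * (1 - cos t) := by
  have hs : 0 ≤ sin (t / 2) := sin_nonneg_of_nonneg_of_le_pi (by linarith) (by linarith)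
  have hhalf := mul_le_mul_of_nonneg_left (mul_cos_le_sin (t := t / 2) (by linarith)
    (by linarith)) hs
  have hsin : sin t = 2 * sin (t / 2) * cos (t / 2) := by rw [← sin_two_mul]; ring_nf
  have hcos : cos t = 1 - 2 * sin (t / 2) ^ 2 := by
    have := cos_two_mul' (t / 2)
    rw [show 2 * (t / 2) = t by ring] at this
    linarith [sin_sq_add_cos_sq (t / 2)]
  rw [hsin, hcos]
  linarith

lemma three_mul_sin_le {t : ℝ} (h0 : 0 ≤ t) (h2π : t ≤ 2 * π) :
    3 * sin t ≤ t * (2 + cos t) := by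
  have hderiv (x : ℝ) : HasDerivAt (fun x => x * (2 + cos x) - 3 * sin x)
      (2 * (1 - cos x) - x * sin x) x := by
    refine (((hasDerivAt_id' x).mul ((hasDerivAt_cos x).const_add 2)).sub
      ((hasDerivAt_sin x).const_mul 3)).congr_deriv ?_
    ring
  have hmono : MonotoneOn (fun x => x * (2 + cos x) - 3 * sin x) (Icc 0 (2 * π)) := by
    refine monotoneOn_of_hasDerivWithinAt_nonneg (convex_Icc _ _)
      (by fun_prop) (fun x _ => (hderiv x).hasDerivWithinAt) fun x hx => ?_
    rw [interior_Icc] at hx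
    linarith [mul_sin_le_two_mul_one_sub_cos hx.1.le hx.2.le]
  have := hmono (left_mem_Icc.mpr (by positivity)) ⟨h0, h2π⟩ h0
  simp only [zero_mul, sin_zero, mul_zero, sub_zero] at this
  linarith

noncomputable def P (t : ℝ) : ℝ := (t - sin t) / (1 - cos t)

noncomputable def Q (t : ℝ) : ℝ := (t + sin t) / (1 + cos t)

noncomputable def P' (t : ℝ) : ℝ := (2 * (1 - cos t) - t * sin t) / (1 - cos t) ^ 2

noncomputable def Q' (t : ℝ) : ℝ := (2 * (1 + cos t) + t * sin t) / (1 + cos t) ^ 2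

noncomputable def P'' (t : ℝ) : ℝ := (t * (2 + cos t) - 3 * sin t) / (1 - cos t) ^ 2

noncomputable def Q'' (t : ℝ) : ℝ := (3 * sin t + t * (2 - cos t)) / (1 + cos t) ^ 2

lemma hasDerivAt_P {t : ℝ} (h : 1 - cos t ≠ 0) : HasDerivAt P (P' t) t := by
  refine (((hasDerivAt_id' t).sub (hasDerivAt_sin t)).div
    ((hasDerivAt_cos t).const_sub 1) h).congr_deriv ?_
  simp only [P', Pi.sub_apply]
  field_simp
  linear_combination sin_sq_add_cos_sq t

lemma hasDerivAt_Q {t : ℝ} (h : 1 + cos t ≠ 0) : HasDerivAt Q (Q' t) t := by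
  refine (((hasDerivAt_id' t).add (hasDerivAt_sin t)).div
    ((hasDerivAt_cos t).const_add 1) h).congr_deriv ?_
  simp only [Q', Pi.add_apply]
  field_simp
  linear_combination sin_sq_add_cos_sq t

lemma hasDerivAt_P' {t : ℝ} (h : 1 - cos t ≠ 0) : HasDerivAt P' (P'' t) t := by
  refine (((((hasDerivAt_cos t).const_sub 1).const_mul 2).sub
    ((hasDerivAt_id' t).mul (hasDerivAt_sin t))).div
    (((hasDerivAt_cos t).const_sub 1).pow 2) (pow_ne_zero 2 h)).congr_deriv ?_
  simp only [P'', Pi.sub_apply, Pi.mul_apply, Pi.pow_apply]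
  field_simp
  linear_combination (2 * t * (1 - cos t)) * sin_sq_add_cos_sq t

lemma hasDerivAt_Q' {t : ℝ} (h : 1 + cos t ≠ 0) : HasDerivAt Q' (Q'' t) t := by
  refine (((((hasDerivAt_cos t).const_add 1).const_mul 2).add
    ((hasDerivAt_id' t).mul (hasDerivAt_sin t))).div
    (((hasDerivAt_cos t).const_add 1).pow 2) (pow_ne_zero 2 h)).congr_deriv ?_
  simp only [Q'', Pi.add_apply, Pi.mul_apply, Pi.pow_apply]
  field_simp
  linear_combination (2 * t * (1 + cos t)) * sin_sq_add_cos_sq t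

lemma P_zero : P 0 = 0 := by simp [P]

lemma Q_zero : Q 0 = 0 := by simp [Q]

lemma P_nonneg {t : ℝ} (h0 : 0 ≤ t) : 0 ≤ P t :=
  div_nonneg (sub_nonneg.mpr (sin_le h0)) (sub_nonneg.mpr (cos_le_one t))

lemma Q_pos {t : ℝ} (h0 : 0 < t) (hπ : t < π) : 0 < Q t :=
  div_pos (by linarith [sin_pos_of_pos_of_lt_pi h0 hπ]) (one_add_cos_pos h0.le hπ)

lemma P_le_Q {t : ℝ} (h0 : 0 < t) (hπ : t < π) : P t ≤ Q t := by
  rw [P, Q, div_le_div_iff₀ (one_sub_cos_pos h0 hπ.le) (one_add_cos_pos h0.le hπ)]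
  nlinarith [mul_cos_le_sin h0.le hπ.le]

lemma P'_nonneg {t : ℝ} (h0 : 0 ≤ t) (h2π : t ≤ 2 * π) : 0 ≤ P' t :=
  div_nonneg (sub_nonneg.mpr (mul_sin_le_two_mul_one_sub_cos h0 h2π)) (sq_nonneg _)

lemma Q'_pos {t : ℝ} (h0 : 0 ≤ t) (hπ : t < π) : 0 < Q' t := by
  have hc := one_add_cos_pos h0 hπ
  have hs := sin_nonneg_of_nonneg_of_le_pi h0 hπ.le
  exact div_pos (by nlinarith) (by positivity)

lemma P''_nonneg {t : ℝ} (h0 : 0 ≤ t) (h2π : t ≤ 2 * π) : 0 ≤ P'' t :=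
  div_nonneg (sub_nonneg.mpr (three_mul_sin_le h0 h2π)) (sq_nonneg _)

lemma Q''_nonneg {t : ℝ} (h0 : 0 ≤ t) (hπ : t ≤ π) : 0 ≤ Q'' t := by
  have hs := sin_nonneg_of_nonneg_of_le_pi h0 hπ
  have hc := cos_le_one t
  exact div_nonneg (by nlinarith) (sq_nonneg _)

lemma tendsto_P_nhdsGT_zero : Tendsto P (𝓝[>] 0) (𝓝 0) := by
  have hQ : Tendsto Q (𝓝[>] 0) (𝓝 0) := by
    have := (hasDerivAt_Q (t := 0) (by norm_num)).continuousAt.tendsto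
    rw [Q_zero] at this
    exact this.mono_left nhdsWithin_le_nhds
  have hmem : Ioo 0 π ∈ 𝓝[>] (0 : ℝ) := Ioo_mem_nhdsGT pi_pos
  refine tendsto_of_tendsto_of_tendsto_of_le_of_le' tendsto_const_nhds hQ ?_ ?_
  · filter_upwards [hmem] with _ ht using P_nonneg ht.1.le
  · filter_upwards [hmem] with _ ht using P_le_Q ht.1 ht.2

lemma continuousOn_P : ContinuousOn P (Ico 0 π) := by
  rintro t ⟨h0, hπ⟩
  rcases h0.eq_or_lt with rfl | h0
  · refine (continuousWithinAt_Ioi_iff_Ici.mp ?_).mono Ico_subset_Ici_self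
    rw [ContinuousWithinAt, P_zero]
    exact tendsto_P_nhdsGT_zero
  · exact (hasDerivAt_P (one_sub_cos_pos h0 hπ.le).ne').continuousAt.continuousWithinAt

lemma continuousOn_Q : ContinuousOn Q (Ico 0 π) := fun _ ht =>
  (hasDerivAt_Q (one_add_cos_pos ht.1 ht.2).ne').continuousAt.continuousWithinAt

lemma monotoneOn_P : MonotoneOn P (Ico 0 π) := by
  refine monotoneOn_of_hasDerivWithinAt_nonneg (f' := P') (convex_Ico 0 π) continuousOn_P
    (fun t ht => ?_) (fun t ht => ?_) <;> rw [interior_Ico] at ht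
  · exact (hasDerivAt_P (one_sub_cos_pos ht.1 ht.2.le).ne').hasDerivWithinAt
  · exact P'_nonneg ht.1.le (by linarith [ht.2, pi_pos])

lemma strictMonoOn_Q : StrictMonoOn Q (Ico 0 π) := by
  refine strictMonoOn_of_hasDerivWithinAt_pos (f' := Q') (convex_Ico 0 π) continuousOn_Q
    (fun t ht => ?_) (fun t ht => ?_) <;> rw [interior_Ico] at ht
  · exact (hasDerivAt_Q (one_add_cos_pos ht.1.le ht.2).ne').hasDerivWithinAt
  · exact Q'_pos ht.1.le ht.2

lemma convexOn_P : ConvexOn ℝ (Ioo 0 π) P := by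
  refine convexOn_of_hasDerivWithinAt2_nonneg (f' := P') (f'' := P'') (convex_Ioo 0 π)
    (continuousOn_P.mono Ioo_subset_Ico_self) (fun t ht => ?_) (fun t ht => ?_)
    (fun t ht => ?_) <;> rw [interior_Ioo] at ht
  · exact (hasDerivAt_P (one_sub_cos_pos ht.1 ht.2.le).ne').hasDerivWithinAt
  · exact (hasDerivAt_P' (one_sub_cos_pos ht.1 ht.2.le).ne').hasDerivWithinAt
  · exact P''_nonneg ht.1.le (by linarith [ht.2, pi_pos])

lemma convexOn_Q : ConvexOn ℝ (Ioo 0 π) Q := by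
  refine convexOn_of_hasDerivWithinAt2_nonneg (f' := Q') (f'' := Q'') (convex_Ioo 0 π)
    (continuousOn_Q.mono Ioo_subset_Ico_self) (fun t ht => ?_) (fun t ht => ?_)
    (fun t ht => ?_) <;> rw [interior_Ioo] at ht
  · exact (hasDerivAt_Q (one_add_cos_pos ht.1.le ht.2).ne').hasDerivWithinAt
  · exact (hasDerivAt_Q' (one_add_cos_pos ht.1.le ht.2).ne').hasDerivWithinAt
  · exact Q''_nonneg ht.1.le ht.2.le

lemma tendsto_Q_nhdsLT_pi : Tendsto Q (𝓝[<] π) atTop := by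
  have hnum : Tendsto (fun t => t + sin t) (𝓝[<] π) (𝓝 π) :=
    ((by fun_prop : Continuous fun t => t + sin t).tendsto' π π (by simp)).mono_left
      nhdsWithin_le_nhds
  have hden : Tendsto (fun t => 1 + cos t) (𝓝[<] π) (𝓝[>] 0) := by
    refine tendsto_nhdsWithin_iff.mpr ⟨?_, ?_⟩
    · exact ((by fun_prop : Continuous fun t => 1 + cos t).tendsto' π 0 (by simp)).mono_left
        nhdsWithin_le_nhds
    · filter_upwards [Ioo_mem_nhdsLT pi_pos] with _ ht using one_add_cos_pos ht.1.le ht.2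
  exact hnum.pos_mul_atTop pi_pos hden.inv_tendsto_nhdsGT_zero

noncomputable def G (a b t : ℝ) : ℝ := a * P t + b * Q t

section

variable {a b : ℝ}

lemma G_zero : G a b 0 = 0 := by simp [G, P_zero, Q_zero]

lemma continuousOn_G : ContinuousOn (G a b) (Ico 0 π) :=
  (continuousOn_P.const_smul a).add (continuousOn_Q.const_smul b)

lemma strictMonoOn_G (ha : 0 ≤ a) (hb : 0 < b) : StrictMonoOn (G a b) (Ico 0 π) :=
  MonotoneOn.add_strictMono
    (fun _ hs _ ht hst => mul_le_mul_of_nonneg_left (monotoneOn_P hs ht hst) ha)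
    (fun _ hs _ ht hst => mul_lt_mul_of_pos_left (strictMonoOn_Q hs ht hst) hb)

lemma convexOn_G (ha : 0 ≤ a) (hb : 0 < b) : ConvexOn ℝ (Ioo 0 π) (G a b) :=
  (convexOn_P.smul ha).add (convexOn_Q.smul hb.le)

lemma tendsto_G_nhdsLT_pi (ha : 0 ≤ a) (hb : 0 < b) : Tendsto (G a b) (𝓝[<] π) atTop := by
  refine tendsto_atTop_mono' _ ?_ (tendsto_Q_nhdsLT_pi.const_mul_atTop hb)
  filter_upwards [Ioo_mem_nhdsLT pi_pos] with t ht
  have := mul_nonneg ha (P_nonneg ht.1.le)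
  simp only [G]; linarith

lemma image_G (ha : 0 ≤ a) (hb : 0 < b) : G a b '' Ioo 0 π = Ioi 0 := by
  refine Subset.antisymm ?_ fun y hy => ?_
  · rintro _ ⟨t, ht, rfl⟩
    exact G_zero (a := a) (b := b) ▸
      strictMonoOn_G ha hb (left_mem_Ico.mpr pi_pos) (Ioo_subset_Ico_self ht) ht.1
  obtain ⟨c, hyc, hc⟩ : ∃ c, y < G a b c ∧ c ∈ Ioo 0 π :=
    (((tendsto_G_nhdsLT_pi ha hb).eventually_gt_atTop y).and (Ioo_mem_nhdsLT pi_pos)).exists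
  have hIVT := intermediate_value_Ioo hc.1.le
    (continuousOn_G.mono (Icc_subset_Ico_right hc.2)) ⟨by rwa [G_zero], hyc⟩
  exact image_mono (Ioo_subset_Ioo_right hc.2.le) hIVT

end

lemma fdelta_eq_G {v0 v1 : ℝ} (hv0 : 0 ≤ v0) (hv1 : 0 ≤ v1) :
    EqOn (fun δ => fdelta δ v0 v1)
      (fun δ => G ((√v1 - √v0) ^ 2 / 2) ((√v1 + √v0) ^ 2 / 2) (δ / 2)) (Ico 0 (2 * π)) := by
  rintro δ ⟨h0, h2π⟩
  rcases h0.eq_or_lt with rfl | h0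
  · simp [fdelta, G_zero]
  obtain ⟨x, hx, rfl⟩ : ∃ x, 0 ≤ x ∧ v0 = x ^ 2 :=
    ⟨√v0, sqrt_nonneg _, (sq_sqrt hv0).symm⟩
  obtain ⟨y, hy, rfl⟩ : ∃ y, 0 ≤ y ∧ v1 = y ^ 2 :=
    ⟨√v1, sqrt_nonneg _, (sq_sqrt hv1).symm⟩
  obtain ⟨t, rfl⟩ : ∃ t, δ = 2 * t := ⟨δ / 2, by ring⟩
  have hs : sin t ≠ 0 := (sin_pos_of_pos_of_lt_pi (by linarith) (by linarith)).ne'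
  have hc1 := (one_sub_cos_pos (t := t) (by linarith) (by linarith)).ne'
  have hc2 := (one_add_cos_pos (t := t) (by linarith) (by linarith)).ne'
  have hsqrt : √(y ^ 2 * x ^ 2) = y * x := by rw [← mul_pow, sqrt_sq (mul_nonneg hy hx)]
  dsimp only
  rw [fdelta, if_neg h0.ne']
  simp only [G, P, Q, sqrt_sq hx, sqrt_sq hy, hsqrt, sin_two_mul,
    mul_div_cancel_left₀ t two_ne_zero]
  field_simp
  linear_combination (-((y - x) ^ 2 * (t - sin t) * (1 + cos t) +
    (1 - cos t) * (y + x) ^ 2 * (t + sin t))) * sin_sq_add_cos_sq t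

end Fdelta

/-- Lemma: for `v₀, v₁ ≥ 0` not both zero, `δ ↦ f(δ, v₀, v₁)` is strictly increasing on
`[0, 2π)`, convex on `(0, 2π)`, and maps `(0, 2π)` onto `(0, ∞)`. -/
theorem fdelta_strictMono_convex_surj (v0 v1 : ℝ) (hv0 : 0 ≤ v0) (hv1 : 0 ≤ v1)
    (hv : ¬(v0 = 0 ∧ v1 = 0)) :
    StrictMonoOn (fun δ => fdelta δ v0 v1) (Set.Ico 0 (2 * Real.pi)) ∧
    ConvexOn ℝ (Set.Ioo 0 (2 * Real.pi)) (fun δ => fdelta δ v0 v1) ∧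
    (fun δ => fdelta δ v0 v1) '' Set.Ioo 0 (2 * Real.pi) = Set.Ioi 0 := by
  have ha : 0 ≤ (√v1 - √v0) ^ 2 / 2 := by positivity
  have hb : 0 < (√v1 + √v0) ^ 2 / 2 := by
    have : 0 < √v1 + √v0 := by
      rcases not_and_or.mp hv with h | h
      · exact add_pos_of_nonneg_of_pos (sqrt_nonneg _) (sqrt_pos.mpr (hv0.lt_of_ne' h))
      · exact add_pos_of_pos_of_nonneg (sqrt_pos.mpr (hv1.lt_of_ne' h)) (sqrt_nonneg _)
    positivity
  have hf := Fdelta.fdelta_eq_G hv0 hv1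
  have hf' := hf.mono Ioo_subset_Ico_self
  refine ⟨((Fdelta.strictMonoOn_G ha hb).comp_div_const two_pos).congr hf.symm,
    ((Fdelta.convexOn_G ha hb).comp_div_const two_pos).congr hf'.symm, ?_⟩
  rw [hf'.image_eq, image_comp_div_const_Ioo two_pos, Fdelta.image_G ha hb]
end

section
/- Let x₀, x₁ ∈ ℝ and let v₀, v₁ ≥ 0 with max(v₀,v₁) > 0. If |x₁ − x₀| > (π/2)·(v₁ + v₀) + 2·√(v₁v₀) (i.e., the points (x₀,v₀) and (x₁,v₁) are δ-far), then |x₁ − x₀| > F(min(v₀,v₁), max(v₀,v₁), max(v₀,v₁)^(−1/2)) (i.e., the points are C-far). -/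
open Real

theorem Fbar_inv_sqrt_self {v : ℝ} (hv : 0 ≤ v) : Fbar v (√v)⁻¹ = π / 2 * v := by
  rcases hv.eq_or_lt with rfl | hv
  · simp [Fbar]
  have hs : √v ≠ 0 := (sqrt_pos.2 hv).ne'
  have hC2 : ((√v)⁻¹) ^ 2 * v = 1 := by rw [inv_pow, sq_sqrt hv.le, inv_mul_cancel₀ hv.ne']
  rw [Fbar, inv_mul_cancel₀ hs, arcsin_one, hC2, sub_self, sqrt_zero, inv_pow, sq_sqrt hv.le]
  field_simp
  ring

theorem neg_sqrt_div_le_Fbar {v C : ℝ} (hv : 0 ≤ v) (hC : 0 ≤ C) : -(√v / C) ≤ Fbar v C := by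
  have harcsin : 0 ≤ arcsin (C * √v) / C ^ 2 :=
    div_nonneg (arcsin_nonneg.2 (mul_nonneg hC (sqrt_nonneg v))) (sq_nonneg C)
  have hroot : √v * √(1 - C ^ 2 * v) / C ≤ √v / C := by
    gcongr
    exact mul_le_of_le_one_right (sqrt_nonneg v) (sqrt_le_one.2 (sub_le_self _ (by positivity)))
  rw [Fbar]
  linarith

theorem F_inv_sqrt_le {v0 v1 : ℝ} (hv0 : 0 ≤ v0) (hv1 : 0 ≤ v1) :
    F v0 v1 (√v1)⁻¹ ≤ π / 2 * v1 + √(v0 * v1) := by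
  have h := neg_sqrt_div_le_Fbar hv0 (inv_nonneg.2 (sqrt_nonneg v1))
  rw [div_inv_eq_mul, ← sqrt_mul hv0] at h
  rw [F, Fbar_inv_sqrt_self hv1]
  linarith

theorem delta_far_implies_C_far_general (x0 x1 v0 v1 : ℝ) (hv0 : 0 ≤ v0) (hv1 : 0 ≤ v1)
    (hdfar : Real.pi / 2 * (v1 + v0) + 2 * Real.sqrt (v1 * v0) < |x1 - x0|) :
    F (min v0 v1) (max v0 v1) ((Real.sqrt (max v0 v1))⁻¹) < |x1 - x0| := by
  have hmin : 0 ≤ min v0 v1 := le_min hv0 hv1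
  have hsum : v1 + v0 = min v0 v1 + max v0 v1 := by rw [min_add_max, add_comm]
  have hprod : v1 * v0 = min v0 v1 * max v0 v1 := by rw [min_mul_max, mul_comm]
  calc F (min v0 v1) (max v0 v1) (√(max v0 v1))⁻¹
      ≤ π / 2 * max v0 v1 + √(min v0 v1 * max v0 v1) :=
        F_inv_sqrt_le hmin (le_max_of_le_left hv0)
    _ ≤ π / 2 * (v1 + v0) + 2 * √(v1 * v0) := by
        rw [hsum, hprod]
        nlinarith [pi_pos, sqrt_nonneg (min v0 v1 * max v0 v1)]
    _ < |x1 - x0| := hdfar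

/-- Lemma: if the points `(x₀,v₀)` and `(x₁,v₁)` are δ-far, then they are C-far. -/
theorem delta_far_implies_C_far (x0 x1 v0 v1 : ℝ) (hv0 : 0 ≤ v0) (hv1 : 0 ≤ v1)
    (hmax : 0 < max v0 v1)
    (hdfar : Real.pi / 2 * (v1 + v0) + 2 * Real.sqrt (v1 * v0) < |x1 - x0|) :
    F (min v0 v1) (max v0 v1) ((Real.sqrt (max v0 v1))⁻¹) < |x1 - x0| :=
  delta_far_implies_C_far_general x0 x1 v0 v1 hv0 hv1 hdfar
end

section
/- Let 0 ≤ v₀ ≤ v₁ with v₁ > 0, let x₀ < x₁, and suppose δ̂ ∈ (π, 2π) satisfies f(δ̂, v₀, v₁) = x₁ − x₀. Define C̃ = sin(δ̂/2) / √(v₁ + v₀ − 2√(v₁v₀)·cos(δ̂/2)). Then 0 < C̃ < v₁^(−1/2) and F̃(v₀, v₁, C̃) = x₁ − x₀; that is, C̃ solves the far-point C-equation. -/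
/-!
Put `a = √v₀`, `b = √v₁`, `φ = δ̂/2` and let `R = √(a² + b² − 2ab cos φ)` be the third side of
the triangle with sides `a`, `b` enclosing the angle `φ`, so that `C̃ = sin φ / R`. The identity
`R² = (b − a cos φ)² + (a sin φ)²` gives `√(1 − C̃²a²) = (b − a cos φ)/R`, and the angles
`arccos (C̃a)` and `arccos (C̃b)` add up to `φ`. Substituting these into `F̃`, and
`sin δ̂ = 2 sin φ cos φ` into `f`, turns both into `(φR² + sin φ (2ab − (a² + b²) cos φ)) / sin² φ`.
-/

open Real Set

noncomputable def triangleSide (a b φ : ℝ) : ℝ :=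
  √(a ^ 2 + b ^ 2 - 2 * a * b * cos φ)

section triangleSide

variable {a b φ : ℝ}

theorem triangleSide_comm (a b φ : ℝ) : triangleSide a b φ = triangleSide b a φ := by
  unfold triangleSide; ring_nf

theorem triangleSide_sq_eq_sq_add_sq (a b φ : ℝ) :
    triangleSide a b φ ^ 2 = (b - a * cos φ) ^ 2 + (a * sin φ) ^ 2 := by
  have hsc := sin_sq_add_cos_sq φ
  rw [triangleSide, sq_sqrt (by nlinarith [sq_nonneg (b - a * cos φ), sq_nonneg (a * sin φ)])]
  linear_combination (-a ^ 2) * hsc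

theorem triangleSide_sq (a b φ : ℝ) :
    triangleSide a b φ ^ 2 = a ^ 2 + b ^ 2 - 2 * a * b * cos φ := by
  linear_combination triangleSide_sq_eq_sq_add_sq a b φ + a ^ 2 * sin_sq_add_cos_sq φ

theorem triangleSide_pos (hb : b ≠ 0) (hφ : sin φ ≠ 0) : 0 < triangleSide a b φ := by
  have hsq : 0 < triangleSide a b φ ^ 2 := by
    rw [triangleSide_comm, triangleSide_sq_eq_sq_add_sq]
    exact add_pos_of_nonneg_of_pos (sq_nonneg _) (sq_pos_iff.mpr (mul_ne_zero hb hφ))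
  exact (sqrt_nonneg _).lt_of_ne' (sq_pos_iff.mp hsq)

theorem one_sub_div_triangleSide_sq_mul_sq (hR : triangleSide a b φ ≠ 0) :
    1 - (sin φ / triangleSide a b φ) ^ 2 * a ^ 2 =
      ((b - a * cos φ) / triangleSide a b φ) ^ 2 := by
  field_simp
  linear_combination triangleSide_sq_eq_sq_add_sq a b φ

theorem sqrt_one_sub_div_triangleSide_sq_mul_sq (hR : 0 < triangleSide a b φ)
    (hab : a * cos φ ≤ b) :
    √(1 - (sin φ / triangleSide a b φ) ^ 2 * a ^ 2) = (b - a * cos φ) / triangleSide a b φ := by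
  rw [one_sub_div_triangleSide_sq_mul_sq hR.ne', sqrt_sq (div_nonneg (sub_nonneg.mpr hab) hR.le)]

theorem arccos_add_arccos_eq_angle (ha : 0 ≤ a) (hb : 0 < b) (hφ : φ ∈ Ico (π / 2) π) :
    arccos (sin φ / triangleSide a b φ * a) + arccos (sin φ / triangleSide a b φ * b) = φ := by
  obtain ⟨hφ₁, hφ₂⟩ := hφ
  have hs : 0 < sin φ := sin_pos_of_pos_of_lt_pi (by linarith [pi_pos]) hφ₂
  have hc : cos φ ≤ 0 := cos_nonpos_of_pi_div_two_le_of_le hφ₁ (by linarith [pi_pos])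
  have hR : 0 < triangleSide a b φ := triangleSide_pos hb.ne' hs.ne'
  have hab : a * cos φ ≤ b := by nlinarith
  set R := triangleSide a b φ
  set x := sin φ / R * a with hx_def
  have hx : 0 ≤ x := by positivity
  have hx_sq : 1 - x ^ 2 = ((b - a * cos φ) / R) ^ 2 := by
    rw [mul_pow, one_sub_div_triangleSide_sq_mul_sq hR.ne']
  have hx_le : x ≤ 1 := (sq_le_one_iff₀ hx).mp (by linarith [sq_nonneg ((b - a * cos φ) / R)])
  have hcos_arccos : cos (arccos x) = x := cos_arccos (by linarith) hx_le
  have hsin_arccos : sin (arccos x) = (b - a * cos φ) / R := by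
    rw [sin_arccos, hx_sq, sqrt_sq (div_nonneg (sub_nonneg.mpr hab) hR.le)]
  have hcos_sub : cos (φ - arccos x) = sin φ / R * b := by
    rw [cos_sub, hcos_arccos, hsin_arccos, hx_def]
    field_simp
    ring
  have harccos_le : arccos x ≤ π / 2 := arccos_le_pi_div_two.mpr hx
  rw [← hcos_sub, arccos_cos (by linarith) (by linarith [arccos_nonneg x])]
  ring

theorem div_triangleSide_lt_inv (hb : 0 < b) (hs : 0 < sin φ) (hba : b * cos φ < a) :
    sin φ / triangleSide a b φ < b⁻¹ := by
  have hR := triangleSide_pos (a := a) hb.ne' hs.ne'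
  rw [triangleSide_comm] at hR ⊢
  have hx_sq := one_sub_div_triangleSide_sq_mul_sq hR.ne'
  have hpos : 0 < ((a - b * cos φ) / triangleSide b a φ) ^ 2 :=
    pow_pos (div_pos (sub_pos.mpr hba) hR) 2
  rw [← one_div, lt_div_iff₀ hb]
  exact (sq_lt_one_iff₀ (by positivity)).mp (by rw [mul_pow]; linarith)

theorem Ftilde_sq_sq (ha : 0 ≤ a) (hb : 0 < b) (hφ : φ ∈ Ico (π / 2) π) :
    Ftilde (a ^ 2) (b ^ 2) (sin φ / triangleSide a b φ) =
      (φ * triangleSide a b φ ^ 2 + sin φ * (2 * a * b - (a ^ 2 + b ^ 2) * cos φ)) / sin φ ^ 2 := by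
  have hs : 0 < sin φ := sin_pos_of_pos_of_lt_pi (by linarith [pi_pos, hφ.1]) hφ.2
  have hc : cos φ ≤ 0 := cos_nonpos_of_pi_div_two_le_of_le hφ.1 (by linarith [pi_pos, hφ.2])
  have hR : 0 < triangleSide a b φ := triangleSide_pos hb.ne' hs.ne'
  have hsqrt_a := sqrt_one_sub_div_triangleSide_sq_mul_sq hR (by nlinarith : a * cos φ ≤ b)
  have hsqrt_b : √(1 - (sin φ / triangleSide a b φ) ^ 2 * b ^ 2) =
      (a - b * cos φ) / triangleSide a b φ := by
    rw [triangleSide_comm] at hR ⊢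
    exact sqrt_one_sub_div_triangleSide_sq_mul_sq hR (by nlinarith)
  have harccos_b := eq_sub_of_add_eq' (arccos_add_arccos_eq_angle ha hb hφ)
  rw [Ftilde, sqrt_sq ha, sqrt_sq hb.le, hsqrt_a, hsqrt_b, harccos_b]
  field_simp
  ring

end triangleSide

theorem fdelta_sq_sq {a b δ : ℝ} (ha : 0 ≤ a) (hb : 0 ≤ b) (hδ : δ ≠ 0) :
    fdelta δ (a ^ 2) (b ^ 2) = (δ / 2 * triangleSide a b (δ / 2) ^ 2 +
      sin (δ / 2) * (2 * a * b - (a ^ 2 + b ^ 2) * cos (δ / 2))) / sin (δ / 2) ^ 2 := by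
  have hsin : sin δ = 2 * sin (δ / 2) * cos (δ / 2) := by
    rw [← sin_two_mul]; ring_nf
  rw [fdelta, if_neg hδ, ← mul_pow, sqrt_sq (mul_nonneg hb ha), triangleSide_sq, hsin]
  ring

theorem delta_solution_gives_C_solution_general (x0 x1 v0 v1 δ : ℝ)
    (hv0 : 0 ≤ v0) (hv1 : 0 < v1)
    (hδ : δ ∈ Set.Ioo Real.pi (2 * Real.pi)) (hsol : fdelta δ v0 v1 = x1 - x0) :
    0 < Real.sin (δ / 2) / Real.sqrt (v1 + v0 - 2 * Real.sqrt (v1 * v0) * Real.cos (δ / 2)) ∧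
    Real.sin (δ / 2) / Real.sqrt (v1 + v0 - 2 * Real.sqrt (v1 * v0) * Real.cos (δ / 2)) <
      (Real.sqrt v1)⁻¹ ∧
    Ftilde v0 v1
      (Real.sin (δ / 2) / Real.sqrt (v1 + v0 - 2 * Real.sqrt (v1 * v0) * Real.cos (δ / 2))) =
      x1 - x0 := by
  obtain ⟨a, ha, rfl⟩ : ∃ a, 0 ≤ a ∧ v0 = a ^ 2 := ⟨√v0, sqrt_nonneg _, (sq_sqrt hv0).symm⟩
  obtain ⟨b, hb, rfl⟩ : ∃ b, 0 < b ∧ v1 = b ^ 2 := ⟨√v1, sqrt_pos.mpr hv1, (sq_sqrt hv1.le).symm⟩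
  have hφ : δ / 2 ∈ Ioo (π / 2) π := ⟨by linarith [hδ.1], by linarith [hδ.2]⟩
  have hs : 0 < sin (δ / 2) := sin_pos_of_pos_of_lt_pi (by linarith [pi_pos, hφ.1]) hφ.2
  have hc : cos (δ / 2) < 0 := cos_neg_of_pi_div_two_lt_of_lt hφ.1 (by linarith [pi_pos, hφ.2])
  have hside :
      √(b ^ 2 + a ^ 2 - 2 * √(b ^ 2 * a ^ 2) * cos (δ / 2)) = triangleSide a b (δ / 2) := by
    rw [triangleSide, ← mul_pow, sqrt_sq (by positivity)]
    ring_nf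
  rw [hside, sqrt_sq hb.le]
  refine ⟨div_pos hs (triangleSide_pos hb.ne' hs.ne'),
    div_triangleSide_lt_inv hb hs (by nlinarith), ?_⟩
  rw [Ftilde_sq_sq ha hb (Ioo_subset_Ico_self hφ), ← hsol,
    fdelta_sq_sq ha hb.le (by linarith [pi_pos, hδ.1])]

/-- Lemma: if `δ̂ ∈ (π, 2π)` solves the δ-equation `f(δ̂, v₀, v₁) = x₁ − x₀`, then
`C̃ = sin(δ̂/2)/√(v₁ + v₀ − 2√(v₁v₀)cos(δ̂/2))` satisfies `0 < C̃ < v₁^(-1/2)` and solves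
the far-point C-equation `F̃(v₀, v₁, C̃) = x₁ − x₀`. -/
theorem delta_solution_gives_C_solution (x0 x1 v0 v1 δ : ℝ)
    (hv0 : 0 ≤ v0) (hv01 : v0 ≤ v1) (hv1 : 0 < v1) (hx : x0 < x1)
    (hδ : δ ∈ Set.Ioo Real.pi (2 * Real.pi)) (hsol : fdelta δ v0 v1 = x1 - x0) :
    0 < Real.sin (δ / 2) / Real.sqrt (v1 + v0 - 2 * Real.sqrt (v1 * v0) * Real.cos (δ / 2)) ∧
    Real.sin (δ / 2) / Real.sqrt (v1 + v0 - 2 * Real.sqrt (v1 * v0) * Real.cos (δ / 2)) <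
      (Real.sqrt v1)⁻¹ ∧
    Ftilde v0 v1
      (Real.sin (δ / 2) / Real.sqrt (v1 + v0 - 2 * Real.sqrt (v1 * v0) * Real.cos (δ / 2))) =
      x1 - x0 :=
  delta_solution_gives_C_solution_general x0 x1 v0 v1 δ hv0 hv1 hδ hsol
end

section
/- Let 0 ≤ v₀ ≤ v₁ with v₁ > 0, let x₀ < x₁, and suppose δ̂ ∈ (π, 2π) satisfies f(δ̂, v₀, v₁) = x₁ − x₀. Define C̃ = sin(δ̂/2) / √(v₁ + v₀ − 2√(v₁v₀)·cos(δ̂/2)). Then 2·(arccos(C̃·√v₀) + arccos(C̃·√v₁))/C̃ = δ̂·√(v₁ + v₀ − 2√(v₁v₀)·cos(δ̂/2)) / sin(δ̂/2); that is, the far-point C-formula and the δ-formula for the Heston distance agree. -/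
open Real Set

theorem cos_arccos_div_sqrt_sq_add_sq (x y : ℝ) :
    cos (arccos (x / √(x ^ 2 + y ^ 2))) = x / √(x ^ 2 + y ^ 2) := by
  have hx : |x| ≤ √(x ^ 2 + y ^ 2) := abs_le_sqrt (by nlinarith)
  have h : |x / √(x ^ 2 + y ^ 2)| ≤ 1 := by
    rw [abs_div, abs_of_nonneg (sqrt_nonneg _)]
    exact div_le_one_of_le₀ hx (sqrt_nonneg _)
  exact cos_arccos (abs_le.1 h).1 (abs_le.1 h).2

theorem sin_arccos_div_sqrt_sq_add_sq {x y : ℝ} (hy : 0 ≤ y) (hxy : 0 < x ^ 2 + y ^ 2) :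
    sin (arccos (x / √(x ^ 2 + y ^ 2))) = y / √(x ^ 2 + y ^ 2) := by
  have hr : √(x ^ 2 + y ^ 2) ^ 2 = x ^ 2 + y ^ 2 := sq_sqrt hxy.le
  have hr0 : √(x ^ 2 + y ^ 2) ≠ 0 := (sqrt_pos.2 hxy).ne'
  rw [sin_arccos, ← sqrt_sq (div_nonneg hy (sqrt_nonneg _))]
  congr 1
  field_simp
  linarith

theorem arccos_add_arccos_sin_div_third_side {u w θ : ℝ} (hu : 0 ≤ u) (hw : 0 ≤ w)
    (huw : 0 < u + w) (hθ : θ ∈ Icc (π / 2) π) :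
    arccos (sin θ / √(u ^ 2 + w ^ 2 - 2 * u * w * cos θ) * u) +
      arccos (sin θ / √(u ^ 2 + w ^ 2 - 2 * u * w * cos θ) * w) = θ := by
  have hc : cos θ ≤ 0 := cos_nonpos_of_pi_div_two_le_of_le hθ.1 (by linarith [hθ.2, pi_pos])
  have hs : 0 ≤ sin θ := sin_nonneg_of_nonneg_of_le_pi (by linarith [pi_pos, hθ.1]) hθ.2
  have hsc := sin_sq_add_cos_sq θ
  have hD : 0 < u ^ 2 + w ^ 2 - 2 * u * w * cos θ := by
    have : 0 < u ^ 2 + w ^ 2 := by nlinarith [mul_pos huw huw, sq_nonneg (u - w)]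
    nlinarith [mul_nonneg (mul_nonneg hu hw) (neg_nonneg.2 hc)]
  have hDu : u ^ 2 + w ^ 2 - 2 * u * w * cos θ = (sin θ * u) ^ 2 + (w - u * cos θ) ^ 2 := by
    linear_combination -u ^ 2 * hsc
  have hDw : u ^ 2 + w ^ 2 - 2 * u * w * cos θ = (sin θ * w) ^ 2 + (u - w * cos θ) ^ 2 := by
    linear_combination -w ^ 2 * hsc
  set r := √(u ^ 2 + w ^ 2 - 2 * u * w * cos θ) with hr_def
  have hr : r ^ 2 = u ^ 2 + w ^ 2 - 2 * u * w * cos θ := sq_sqrt hD.le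
  have hr_pos : 0 < r := sqrt_pos.2 hD
  have cos_a : cos (arccos (sin θ / r * u)) = sin θ * u / r := by
    rw [div_mul_eq_mul_div, hr_def, hDu]; exact cos_arccos_div_sqrt_sq_add_sq _ _
  have sin_a : sin (arccos (sin θ / r * u)) = (w - u * cos θ) / r := by
    rw [div_mul_eq_mul_div, hr_def, hDu]
    exact sin_arccos_div_sqrt_sq_add_sq (by nlinarith) (hDu ▸ hD)
  have cos_b : cos (arccos (sin θ / r * w)) = sin θ * w / r := by
    rw [div_mul_eq_mul_div, hr_def, hDw]; exact cos_arccos_div_sqrt_sq_add_sq _ _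
  have sin_b : sin (arccos (sin θ / r * w)) = (u - w * cos θ) / r := by
    rw [div_mul_eq_mul_div, hr_def, hDw]
    exact sin_arccos_div_sqrt_sq_add_sq (by nlinarith) (hDw ▸ hD)
  have ha_le := arccos_le_pi_div_two.2 (mul_nonneg (div_nonneg hs hr_pos.le) hu)
  have hb_le := arccos_le_pi_div_two.2 (mul_nonneg (div_nonneg hs hr_pos.le) hw)
  refine injOn_cos ⟨add_nonneg (arccos_nonneg _) (arccos_nonneg _), by linarith⟩
    ⟨by linarith [pi_pos, hθ.1], hθ.2⟩ ?_
  rw [cos_add, cos_a, cos_b, sin_a, sin_b]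
  field_simp [hr_pos.ne']
  linear_combination u * w * hsc - cos θ * hr

theorem C_formula_eq_delta_formula_general (v0 v1 δ : ℝ)
    (hv0 : 0 ≤ v0) (hv1 : 0 < v1)
    (hδ : δ ∈ Set.Ioo Real.pi (2 * Real.pi)) :
    2 * (Real.arccos
          (Real.sin (δ / 2) /
            Real.sqrt (v1 + v0 - 2 * Real.sqrt (v1 * v0) * Real.cos (δ / 2)) *
            Real.sqrt v0) +
        Real.arccos
          (Real.sin (δ / 2) /
            Real.sqrt (v1 + v0 - 2 * Real.sqrt (v1 * v0) * Real.cos (δ / 2)) *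
            Real.sqrt v1)) /
      (Real.sin (δ / 2) /
        Real.sqrt (v1 + v0 - 2 * Real.sqrt (v1 * v0) * Real.cos (δ / 2))) =
    δ * Real.sqrt (v1 + v0 - 2 * Real.sqrt (v1 * v0) * Real.cos (δ / 2)) /
      Real.sin (δ / 2) := by
  have hD : v1 + v0 - 2 * √(v1 * v0) * cos (δ / 2) =
      √v0 ^ 2 + √v1 ^ 2 - 2 * √v0 * √v1 * cos (δ / 2) := by
    rw [sqrt_mul hv1.le, sq_sqrt hv0, sq_sqrt hv1.le]
    ring
  have hsum := arccos_add_arccos_sin_div_third_side (θ := δ / 2) (sqrt_nonneg v0)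
    (sqrt_nonneg v1) (add_pos_of_nonneg_of_pos (sqrt_nonneg v0) (sqrt_pos.2 hv1))
    ⟨by linarith [hδ.1], by linarith [hδ.2]⟩
  rw [hD, hsum, div_div_eq_mul_div]
  ring

/-- Lemma: in the far δ-regime the far-point C-formula and the δ-formula for the Heston
distance agree: with `C̃ = sin(δ̂/2)/√(v₁ + v₀ − 2√(v₁v₀)cos(δ̂/2))`,
`2(arccos(C̃√v₀) + arccos(C̃√v₁))/C̃ = δ̂·√(v₁ + v₀ − 2√(v₁v₀)cos(δ̂/2))/sin(δ̂/2)`. -/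
theorem C_formula_eq_delta_formula (x0 x1 v0 v1 δ : ℝ)
    (hv0 : 0 ≤ v0) (hv01 : v0 ≤ v1) (hv1 : 0 < v1) (hx : x0 < x1)
    (hδ : δ ∈ Set.Ioo Real.pi (2 * Real.pi)) (hsol : fdelta δ v0 v1 = x1 - x0) :
    2 * (Real.arccos
          (Real.sin (δ / 2) /
            Real.sqrt (v1 + v0 - 2 * Real.sqrt (v1 * v0) * Real.cos (δ / 2)) *
            Real.sqrt v0) +
        Real.arccos
          (Real.sin (δ / 2) /
            Real.sqrt (v1 + v0 - 2 * Real.sqrt (v1 * v0) * Real.cos (δ / 2)) *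
            Real.sqrt v1)) /
      (Real.sin (δ / 2) /
        Real.sqrt (v1 + v0 - 2 * Real.sqrt (v1 * v0) * Real.cos (δ / 2))) =
    δ * Real.sqrt (v1 + v0 - 2 * Real.sqrt (v1 * v0) * Real.cos (δ / 2)) /
      Real.sin (δ / 2) :=
  C_formula_eq_delta_formula_general v0 v1 δ hv0 hv1 hδ
end

section
/- For every δ with 0 < δ < π/2, one has δ·(π − δ)·sin(δ/2) ≥ 2π·cos(δ/2)·(1 − cos(δ/2)). -/
/-! With `x = δ/2 ∈ (0, π/4)`, the bounds `1 - cos x ≤ x²/2` and `x cos x < sin x` give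
`2π cos x (1 - cos x) ≤ π x (x cos x) < π x sin x`, and `π x ≤ 2x(π - 2x) = δ(π - δ)` because
`x < π/4`. -/

open Real

lemma Real.mul_cos_lt_sin {x : ℝ} (hx0 : 0 < x) (hx : x < π / 2) : x * cos x < sin x := by
  have hcos : 0 < cos x := cos_pos_of_mem_Ioo ⟨by linarith, hx⟩
  simpa [tan_eq_sin_div_cos, lt_div_iff₀ hcos] using lt_tan hx0 hx

lemma Real.one_sub_cos_le_sq_div_two (x : ℝ) : 1 - cos x ≤ x ^ 2 / 2 := by
  linarith [one_sub_sq_div_two_le_cos (x := x)]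

/-- For `0 < δ < π/2`, `δ(π − δ)·sin(δ/2) ≥ 2π·cos(δ/2)·(1 − cos(δ/2))`. -/
theorem trig_ineq_three (δ : ℝ) (h0 : 0 < δ) (h1 : δ < Real.pi / 2) :
    2 * Real.pi * Real.cos (δ / 2) * (1 - Real.cos (δ / 2)) ≤
      δ * (Real.pi - δ) * Real.sin (δ / 2) := by
  set x := δ / 2 with hx
  have hx0 : 0 < x := by positivity
  have hcos : 0 < cos x := cos_pos_of_mem_Ioo ⟨by linarith, by linarith⟩
  have hsin : 0 < sin x := sin_pos_of_pos_of_lt_pi hx0 (by linarith)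
  calc 2 * π * cos x * (1 - cos x)
      ≤ 2 * π * cos x * (x ^ 2 / 2) := by
        gcongr; exact one_sub_cos_le_sq_div_two x
    _ = π * x * (x * cos x) := by ring
    _ ≤ π * x * sin x := by
        gcongr; exact (mul_cos_lt_sin hx0 (by linarith)).le
    _ ≤ δ * (π - δ) * sin x := by
        gcongr ?_ * _
        nlinarith [mul_pos hx0 (show 0 < π - 4 * x by linarith)]
end

section
/- For every δ with 0 < δ < 2π, one has 6·sin(δ/2)·(1 + cos²(δ/2)) − δ·cos(δ/2)·(5 + cos²(δ/2)) > 0. -/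
/-!
Put `x = δ / 2 ∈ (0, π)`, `s = sin x`, `c = cos x`; the claim is `2xc(5 + c²) < 6s(1 + c²)`.
If `c ≤ 0` the left side is nonpositive and the right side positive. If `c > 0`, then
`x < π / 2` and Huygens' inequality `3x < 2 sin x + tan x` gives `3xc < s(2c + 1)`; it remains
to note that `(2c + 1)(5 + c²) ≤ 9(1 + c²)`, since the difference is `2(1 - c)²(2 - c)`.
-/

open Real Set

namespace Real

lemma hasDerivAt_two_mul_sin_add_tan_sub_three_mul {x : ℝ} (hx : cos x ≠ 0) :
    HasDerivAt (fun y => 2 * sin y + tan y - 3 * y)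
      ((1 - cos x) ^ 2 * (2 * cos x + 1) / cos x ^ 2) x := by
  refine ((((hasDerivAt_sin x).const_mul 2).add (hasDerivAt_tan hx)).sub
    ((hasDerivAt_id x).const_mul 3)).congr_deriv ?_
  field_simp
  ring

theorem three_mul_lt_two_mul_sin_add_tan {x : ℝ} (hx₀ : 0 < x) (hx : x < π / 2) :
    3 * x < 2 * sin x + tan x := by
  have hcos : ∀ y ∈ Ico 0 (π / 2), 0 < cos y := fun y hy =>
    cos_pos_of_mem_Ioo ⟨by linarith [hy.1, pi_pos], hy.2⟩
  have hderiv := fun y (hy : y ∈ Ico 0 (π / 2)) =>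
    hasDerivAt_two_mul_sin_add_tan_sub_three_mul (hcos y hy).ne'
  have hmono : StrictMonoOn (fun y => 2 * sin y + tan y - 3 * y) (Ico 0 (π / 2)) := by
    refine strictMonoOn_of_hasDerivWithinAt_pos (convex_Ico 0 (π / 2))
      (fun y hy => (hderiv y hy).continuousAt.continuousWithinAt)
      (fun y hy => (hderiv y (interior_subset hy)).hasDerivWithinAt) fun y hy => ?_
    rw [interior_Ico] at hy
    have hc₀ := hcos y (Ioo_subset_Ico_self hy)
    have hc₁ : cos y < 1 := by
      simpa using cos_lt_cos_of_nonneg_of_le_pi le_rfl (by linarith [hy.2, pi_pos]) hy.1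
    have : 0 < 1 - cos y := by linarith
    positivity
  simpa using hmono ⟨le_rfl, by positivity⟩ ⟨hx₀.le, hx⟩ hx₀

theorem three_mul_mul_cos_lt_sin_mul {x : ℝ} (hx₀ : 0 < x) (hx : x < π / 2) :
    3 * x * cos x < sin x * (2 * cos x + 1) := by
  have hc : 0 < cos x := cos_pos_of_mem_Ioo ⟨by linarith [pi_pos], hx⟩
  calc 3 * x * cos x < (2 * sin x + tan x) * cos x :=
        mul_lt_mul_of_pos_right (three_mul_lt_two_mul_sin_add_tan hx₀ hx) hc
    _ = sin x * (2 * cos x + 1) := by rw [add_mul, tan_mul_cos hc.ne']; ring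

theorem two_mul_mul_cos_mul_lt {x : ℝ} (hx₀ : 0 < x) (hx : x < π) :
    2 * x * cos x * (5 + cos x ^ 2) < 6 * sin x * (1 + cos x ^ 2) := by
  have hs : 0 < sin x := sin_pos_of_pos_of_lt_pi hx₀ hx
  rcases le_or_gt (cos x) 0 with hc | hc
  · calc 2 * x * cos x * (5 + cos x ^ 2) ≤ 0 :=
          mul_nonpos_of_nonpos_of_nonneg (mul_nonpos_of_nonneg_of_nonpos (by positivity) hc)
            (by positivity)
      _ < 6 * sin x * (1 + cos x ^ 2) := by positivity
  have hx' : x < π / 2 := by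
    by_contra! h
    linarith [cos_nonpos_of_pi_div_two_le_of_le h (by linarith)]
  have hpoly : (2 * cos x + 1) * (5 + cos x ^ 2) ≤ 9 * (1 + cos x ^ 2) := by
    nlinarith [mul_nonneg (sq_nonneg (1 - cos x)) (by linarith [cos_le_one x] : 0 ≤ 2 - cos x)]
  calc 2 * x * cos x * (5 + cos x ^ 2) = 2 / 3 * (3 * x * cos x) * (5 + cos x ^ 2) := by ring
    _ < 2 / 3 * (sin x * (2 * cos x + 1)) * (5 + cos x ^ 2) := by
        gcongr 2 / 3 * ?_ * _; exact three_mul_mul_cos_lt_sin_mul hx₀ hx'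
    _ = 2 / 3 * sin x * ((2 * cos x + 1) * (5 + cos x ^ 2)) := by ring
    _ ≤ 2 / 3 * sin x * (9 * (1 + cos x ^ 2)) := by gcongr
    _ = 6 * sin x * (1 + cos x ^ 2) := by ring

end Real

/-- For `0 < δ < 2π`, `6·sin(δ/2)·(1 + cos²(δ/2)) − δ·cos(δ/2)·(5 + cos²(δ/2)) > 0`. -/
theorem trig_ineq_five (δ : ℝ) (h0 : 0 < δ) (h1 : δ < 2 * Real.pi) :
    0 < 6 * Real.sin (δ / 2) * (1 + Real.cos (δ / 2) ^ 2) -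
      δ * Real.cos (δ / 2) * (5 + Real.cos (δ / 2) ^ 2) := by
  have key := two_mul_mul_cos_mul_lt (x := δ / 2) (by positivity) (by linarith)
  rw [mul_div_cancel₀ δ two_ne_zero] at key
  exact sub_pos.2 key
end
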